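/- arXiv:hep-th/9710134 — 7 statements merged into one kernel-verified Lean document; each statement's English description precedes it below -/
import Mathlib

section
/- For N ≥ 1 define the Schur polynomial S_N(t₁,…,t_N) = Σ ∏_{k=1}^{N} t_k^{n_k}/(n_k!), where the sum runs over all tuples (n₁,…,n_N) of natural numbers with Σ_{k=1}^{N} k·n_k = N. Then for every infinitely differentiable function f : ℝ → ℂ, every natural number l, and every z ∈ ℝ, one has (l+1)! · S_{l+1}( f(z), f'(z)/2!, …, f^{(l)}(z)/(l+1)! ) = ((A^l f)(z)), where A is the operator on smooth functions defined by (A g)(z) = f(z)·g(z) + g'(z). -/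
open Finset in
/-- The Schur polynomial `S_N(t₁,…,t_N) = Σ_{n₁+2n₂+⋯+N·n_N = N} ∏_k t_k^{n_k}/n_k!`,
where the variable `t k` (for `k : Fin N`) plays the role of `t_{k+1}`. -/
noncomputable def schurPoly (N : ℕ) (t : Fin N → ℂ) : ℂ :=
  ∑ n ∈ (Fintype.piFinset fun _ : Fin N => Finset.range (N + 1)).filter
      (fun n => ∑ k : Fin N, (k.1 + 1) * n k = N),
    ∏ k : Fin N, t k ^ n k / (Nat.factorial (n k))

section Aux
open Finset

/-- The set of exponent tuples of weight `N` on `Fin M`. -/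
def WT (M N : ℕ) : Finset (Fin M → ℕ) :=
  (Fintype.piFinset fun _ : Fin M => Finset.range (N + 1)).filter
    (fun n => ∑ k : Fin M, (k.1 + 1) * n k = N)

/-- A version of the Schur polynomial with domain size decoupled from the weight. -/
noncomputable def SP (u : ℕ → ℂ) (M N : ℕ) : ℂ :=
  ∑ n ∈ WT M N, ∏ k : Fin M, u k.1 ^ n k / (Nat.factorial (n k))

lemma mem_WT {M N : ℕ} {n : Fin M → ℕ} :
    n ∈ WT M N ↔ ∑ k : Fin M, (k.1 + 1) * n k = N := by
  constructor
  · exact fun h => (Finset.mem_filter.mp h).2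
  · intro h
    refine Finset.mem_filter.mpr ⟨Fintype.mem_piFinset.mpr fun k => ?_, h⟩
    rw [Finset.mem_range]
    have h1 : (k.1 + 1) * n k ≤ N := h ▸
      Finset.single_le_sum (f := fun k : Fin M => (k.1 + 1) * n k)
        (fun _ _ => Nat.zero_le _) (Finset.mem_univ k)
    have h2 : n k ≤ (k.1 + 1) * n k := Nat.le_mul_of_pos_left _ (Nat.succ_pos _)
    omega

lemma nk_zero {M N : ℕ} {n : Fin M → ℕ} (hn : n ∈ WT M N) {k : Fin M}
    (hk : N < k.1 + 1) : n k = 0 := by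
  have h := mem_WT.mp hn
  have h1 : (k.1 + 1) * n k ≤ N := h ▸
    Finset.single_le_sum (f := fun k : Fin M => (k.1 + 1) * n k)
      (fun _ _ => Nat.zero_le _) (Finset.mem_univ k)
  by_contra hc
  have : k.1 + 1 ≤ (k.1 + 1) * n k := Nat.le_mul_of_pos_right _ (Nat.pos_of_ne_zero hc)
  omega

lemma SP_zero (u : ℕ → ℂ) (M : ℕ) : SP u M 0 = 1 := by
  have hWT : WT M 0 = {fun _ => 0} := by
    ext n
    rw [mem_WT, Finset.mem_singleton]
    constructor
    · intro h
      funext k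
      have h1 : (k.1 + 1) * n k ≤ 0 := h ▸
        Finset.single_le_sum (f := fun k : Fin M => (k.1 + 1) * n k)
          (fun _ _ => Nat.zero_le _) (Finset.mem_univ k)
      have h2 : n k ≤ (k.1 + 1) * n k := Nat.le_mul_of_pos_left _ (Nat.succ_pos _)
      omega
    · rintro rfl; simp
  simp [SP, hWT]

lemma SP_trunc (u : ℕ → ℂ) {M N : ℕ} (h : N ≤ M) : SP u (M + 1) N = SP u M N := by
  unfold SP
  refine Finset.sum_nbij' (fun n => n ∘ Fin.castSucc) (fun n => Fin.snoc n 0) ?_ ?_ ?_ ?_ ?_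
  · intro n hn
    have hlast : n (Fin.last M) = 0 := nk_zero hn (by simp [Fin.last]; omega)
    rw [mem_WT]
    have := mem_WT.mp hn
    rw [Fin.sum_univ_castSucc] at this
    simpa [hlast] using this
  · intro n hn
    rw [mem_WT]
    rw [Fin.sum_univ_castSucc]
    simpa using mem_WT.mp hn
  · intro n hn
    have hlast : n (Fin.last M) = 0 := nk_zero hn (by simp [Fin.last]; omega)
    funext k
    induction k using Fin.lastCases with
    | last => simpa using hlast.symm
    | cast k => simp
  · intro n hn
    funext k
    simp
  · intro n hn
    have hlast : n (Fin.last M) = 0 := nk_zero hn (by simp [Fin.last]; omega)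
    rw [Fin.prod_univ_castSucc]
    simp [hlast]

lemma wt_split {M : ℕ} (n : Fin M → ℕ) (k : Fin M) :
    ∑ j : Fin M, (j.1 + 1) * n j
      = (∑ j ∈ Finset.univ.erase k, (j.1 + 1) * n j) + (k.1 + 1) * n k :=
  (Finset.sum_erase_add _ _ (Finset.mem_univ k)).symm

lemma wt_update {M : ℕ} (n : Fin M → ℕ) (k : Fin M) (v : ℕ) :
    ∑ j : Fin M, (j.1 + 1) * (Function.update n k v j)
      = (∑ j ∈ Finset.univ.erase k, (j.1 + 1) * n j) + (k.1 + 1) * v := by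
  rw [wt_split _ k]
  congr 1
  · exact Finset.sum_congr rfl fun j hj => by
      rw [Function.update_of_ne (Finset.mem_erase.mp hj).1]
  · rw [Function.update_self]

lemma prod_update_erase {M : ℕ} (u : ℕ → ℂ) (n : Fin M → ℕ) (k : Fin M) (v : ℕ) :
    ∏ j ∈ Finset.univ.erase k, u j.1 ^ (Function.update n k v j) / (Nat.factorial (Function.update n k v j))
      = ∏ j ∈ Finset.univ.erase k, u j.1 ^ n j / (Nat.factorial (n j)) :=
  Finset.prod_congr rfl fun j hj => by
    rw [Function.update_of_ne (Finset.mem_erase.mp hj).1]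

lemma SP_shift (u : ℕ → ℂ) {M N : ℕ} (k : Fin M) (hk : k.1 + 1 ≤ N) :
    ∑ n ∈ WT M N, ((n k : ℂ) * u k.1 ^ (n k - 1) / (Nat.factorial (n k))
        * ∏ j ∈ Finset.univ.erase k, u j.1 ^ n j / (Nat.factorial (n j)))
      = SP u M (N - (k.1 + 1)) := by
  rw [← Finset.sum_filter_of_ne (p := fun n : Fin M → ℕ => n k ≠ 0)
    (fun n _ h => by
      intro h0
      apply h
      rw [h0]
      simp)]
  unfold SP
  refine Finset.sum_nbij' (fun n => Function.update n k (n k - 1))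
    (fun n => Function.update n k (n k + 1)) ?_ ?_ ?_ ?_ ?_
  · rintro n hn
    obtain ⟨hn, hk0⟩ := Finset.mem_filter.mp hn
    have hw := mem_WT.mp hn
    rw [wt_split n k] at hw
    obtain ⟨b, hb⟩ := Nat.exists_eq_succ_of_ne_zero hk0
    rw [mem_WT, wt_update, hb]
    have hmul : (k.1 + 1) * (b + 1) = (k.1 + 1) * b + (k.1 + 1) := by ring
    rw [hb, hmul] at hw
    simp only [Nat.succ_sub_one]
    omega
  · rintro n hn
    have hw := mem_WT.mp hn
    rw [wt_split n k] at hw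
    refine Finset.mem_filter.mpr ⟨?_, by simp⟩
    rw [mem_WT, wt_update]
    have hmul : (k.1 + 1) * (n k + 1) = (k.1 + 1) * n k + (k.1 + 1) := by ring
    omega
  · rintro n hn
    have hk0 := (Finset.mem_filter.mp hn).2
    funext j
    rcases eq_or_ne j k with rfl | hj
    · simp only [Function.update_self]
      omega
    · simp [Function.update_of_ne hj]
  · rintro n hn
    funext j
    rcases eq_or_ne j k with rfl | hj
    · simp only [Function.update_self]
      omega
    · simp [Function.update_of_ne hj]
  · rintro n hn
    have hk0 := (Finset.mem_filter.mp hn).2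
    obtain ⟨b, hb⟩ := Nat.exists_eq_succ_of_ne_zero hk0
    rw [← Finset.mul_prod_erase Finset.univ _ (Finset.mem_univ k), prod_update_erase]
    have hfac : ((n k : ℂ) * u k.1 ^ (n k - 1) / (Nat.factorial (n k)))
        = u k.1 ^ (Function.update n k (n k - 1) k) / (Nat.factorial (Function.update n k (n k - 1) k)) := by
      rw [Function.update_self, hb]
      simp only [Nat.succ_sub_one, Nat.factorial_succ]
      have h1 : ((Nat.factorial b : ℂ)) ≠ 0 := Nat.cast_ne_zero.mpr (Nat.factorial_ne_zero b)
      push_cast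
      exact mul_div_mul_left _ _ (by exact_mod_cast Nat.succ_ne_zero b)
    rw [← hfac]

lemma SP_inner {M N : ℕ} (u : ℕ → ℂ) (k : Fin M) (hk : k.1 + 1 ≤ N) :
    ∑ n ∈ WT M N, (n k : ℂ) * ∏ j : Fin M, u j.1 ^ n j / (Nat.factorial (n j))
      = u k.1 * SP u M (N - (k.1 + 1)) := by
  rw [← SP_shift u k hk, Finset.mul_sum]
  refine Finset.sum_congr rfl fun n hn => ?_
  rcases Nat.eq_zero_or_pos (n k) with h0 | hpos
  · simp [h0]
  · obtain ⟨b, hb⟩ := Nat.exists_eq_succ_of_ne_zero (Nat.pos_iff_ne_zero.mp hpos)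
    rw [← Finset.mul_prod_erase Finset.univ _ (Finset.mem_univ k), hb]
    rw [pow_succ]
    push_cast
    ring

lemma SP_inner_zero {M N : ℕ} (u : ℕ → ℂ) (k : Fin M) (hk : N < k.1 + 1) :
    ∑ n ∈ WT M N, (n k : ℂ) * ∏ j : Fin M, u j.1 ^ n j / (Nat.factorial (n j)) = 0 :=
  Finset.sum_eq_zero fun n hn => by rw [nk_zero hn hk]; simp

lemma SP_rec (u : ℕ → ℂ) {M N : ℕ} (hNM : N ≤ M) :
    (N : ℂ) * SP u M N
      = ∑ j ∈ Finset.range N, ((j + 1 : ℕ) : ℂ) * u j * SP u M (N - (j + 1)) := by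
  have step1 : (N : ℂ) * SP u M N
      = ∑ k : Fin M, ((k.1 + 1 : ℕ) : ℂ)
          * ∑ n ∈ WT M N, (n k : ℂ) * ∏ j : Fin M, u j.1 ^ n j / (Nat.factorial (n j)) := by
    rw [SP, Finset.mul_sum]
    have hper : ∀ n ∈ WT M N, (N : ℂ) * ∏ j : Fin M, u j.1 ^ n j / (Nat.factorial (n j))
        = ∑ k : Fin M, ((k.1 + 1 : ℕ) : ℂ)
            * ((n k : ℂ) * ∏ j : Fin M, u j.1 ^ n j / (Nat.factorial (n j))) := by
      intro n hn
      rw [← mem_WT.mp hn]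
      push_cast
      rw [Finset.sum_mul]
      exact Finset.sum_congr rfl fun k _ => by ring
    rw [Finset.sum_congr rfl hper, Finset.sum_comm]
    exact Finset.sum_congr rfl fun k _ => (Finset.mul_sum _ _ _).symm
  rw [step1]
  have step2 : ∀ k : Fin M, ((k.1 + 1 : ℕ) : ℂ)
      * ∑ n ∈ WT M N, (n k : ℂ) * ∏ j : Fin M, u j.1 ^ n j / (Nat.factorial (n j))
      = (if k.1 + 1 ≤ N then ((k.1 + 1 : ℕ) : ℂ) * u k.1 * SP u M (N - (k.1 + 1)) else 0) := by
    intro k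
    by_cases hk : k.1 + 1 ≤ N
    · rw [if_pos hk, SP_inner u k hk, mul_assoc]
    · rw [if_neg hk, SP_inner_zero u k (by omega), mul_zero]
  rw [Finset.sum_congr rfl fun k _ => step2 k]
  have step3 : ∑ k : Fin M,
      (if k.1 + 1 ≤ N then ((k.1 + 1 : ℕ) : ℂ) * u k.1 * SP u M (N - (k.1 + 1)) else 0)
      = ∑ j ∈ Finset.range M,
        (if j + 1 ≤ N then ((j + 1 : ℕ) : ℂ) * u j * SP u M (N - (j + 1)) else 0) :=
    Fin.sum_univ_eq_sum_range
      (fun j => if j + 1 ≤ N then ((j + 1 : ℕ) : ℂ) * u j * SP u M (N - (j + 1)) else 0) M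
  rw [step3, ← Finset.sum_subset (Finset.range_subset_range.mpr hNM)
    (fun j _ hj => by rw [if_neg (by simp at hj; omega)])]
  exact Finset.sum_congr rfl fun j hj => by rw [if_pos (by simp at hj; omega)]

noncomputable def UU (f : ℝ → ℂ) (z : ℝ) (k : ℕ) : ℂ :=
  iteratedDeriv k f z / (Nat.factorial (k + 1))

lemma hasDerivAt_UU {f : ℝ → ℂ} (hf : ContDiff ℝ (⊤ : ℕ∞) f) (k : ℕ) (z : ℝ) :
    HasDerivAt (fun z => UU f z k) (((k + 2 : ℕ) : ℂ) * UU f z (k + 1)) z := by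
  have hd : Differentiable ℝ (iteratedDeriv k f) :=
    hf.differentiable_iteratedDeriv k (by exact_mod_cast ENat.coe_lt_top k)
  have h1 : HasDerivAt (iteratedDeriv k f) (iteratedDeriv (k + 1) f z) z := by
    rw [iteratedDeriv_succ]
    exact (hd z).hasDerivAt
  have h2 := h1.div_const ((Nat.factorial (k + 1)) : ℂ)
  refine h2.congr_deriv (Eq.symm ?_)
  unfold UU
  rw [show Nat.factorial (k + 1 + 1) = (k + 2) * Nat.factorial (k + 1) from Nat.factorial_succ _]
  push_cast
  rw [mul_div_assoc']
  exact mul_div_mul_left _ _ (by exact_mod_cast Nat.succ_ne_zero (k + 1))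

lemma HasDerivAt.cpow_nat {c : ℝ → ℂ} {c' : ℂ} {x : ℝ} (n : ℕ) (h : HasDerivAt c c' x) :
    HasDerivAt (fun y => c y ^ n) ((n : ℂ) * c x ^ (n - 1) * c') x := by
  induction n with
  | zero => simpa using hasDerivAt_const x (1 : ℂ)
  | succ m ih =>
    have h2 := ih.mul h
    have hfun : (fun y => c y ^ (m + 1)) = fun y => c y ^ m * c y :=
      funext fun y => pow_succ _ _
    rw [hfun]
    refine h2.congr_deriv (Eq.symm ?_)
    rcases m with _ | s
    · simp
    · simp only [Nat.add_sub_cancel]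
      push_cast
      ring

lemma hasDerivAt_SP {f : ℝ → ℂ} (hf : ContDiff ℝ (⊤ : ℕ∞) f) {M N : ℕ} (hNM : N ≤ M) (z : ℝ) :
    HasDerivAt (fun z => SP (UU f z) M N)
      (∑ i ∈ Finset.range N,
        ((i + 2 : ℕ) : ℂ) * UU f z (i + 1) * SP (UU f z) M (N - (i + 1))) z := by
  have hterm : ∀ n : Fin M → ℕ, HasDerivAt
      (fun z => ∏ k : Fin M, UU f z k.1 ^ n k / (Nat.factorial (n k)))
      (∑ k : Fin M, (∏ j ∈ Finset.univ.erase k, UU f z j.1 ^ n j / (Nat.factorial (n j)))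
        * ((n k : ℂ) * UU f z k.1 ^ (n k - 1) * (((k.1 + 2 : ℕ) : ℂ) * UU f z (k.1 + 1))
            / (Nat.factorial (n k)))) z := by
    intro n
    have h := HasDerivAt.fun_finsetProd (u := Finset.univ)
      (f := fun (k : Fin M) z => UU f z k.1 ^ n k / (Nat.factorial (n k)))
      (f' := fun k => (n k : ℂ) * UU f z k.1 ^ (n k - 1) * (((k.1 + 2 : ℕ) : ℂ) * UU f z (k.1 + 1))
            / (Nat.factorial (n k)))
      (fun k _ => ((hasDerivAt_UU hf k.1 z).cpow_nat (n k)).div_const _)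
    simpa [smul_eq_mul] using h
  have hsum := HasDerivAt.fun_sum (u := WT M N)
    (A := fun n z => ∏ k : Fin M, UU f z k.1 ^ n k / (Nat.factorial (n k)))
    (fun n _ => hterm n)
  show HasDerivAt (fun z => ∑ n ∈ WT M N, ∏ k : Fin M, UU f z k.1 ^ n k / (Nat.factorial (n k))) _ z
  refine hsum.congr_deriv (Eq.symm ?_)
  rw [Finset.sum_comm]
  have hper : ∀ k : Fin M,
      (∑ n ∈ WT M N, (∏ j ∈ Finset.univ.erase k, UU f z j.1 ^ n j / (Nat.factorial (n j)))
        * ((n k : ℂ) * UU f z k.1 ^ (n k - 1) * (((k.1 + 2 : ℕ) : ℂ) * UU f z (k.1 + 1))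
            / (Nat.factorial (n k))))
      = (if k.1 + 1 ≤ N then
          ((k.1 + 2 : ℕ) : ℂ) * UU f z (k.1 + 1) * SP (UU f z) M (N - (k.1 + 1)) else 0) := by
    intro k
    by_cases hk : k.1 + 1 ≤ N
    · rw [if_pos hk, ← SP_shift (UU f z) k hk, Finset.mul_sum]
      exact Finset.sum_congr rfl fun n hn => by ring
    · rw [if_neg hk]
      exact Finset.sum_eq_zero fun n hn => by
        rw [nk_zero hn (by omega)]; simp
  rw [Finset.sum_congr rfl fun k _ => hper k]
  rw [Fin.sum_univ_eq_sum_range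
    (fun j => if j + 1 ≤ N then
      ((j + 2 : ℕ) : ℂ) * UU f z (j + 1) * SP (UU f z) M (N - (j + 1)) else 0) M]
  rw [← Finset.sum_subset (Finset.range_subset_range.mpr hNM)
    (fun j _ hj => by rw [if_neg (by simp at hj; omega)])]
  exact Finset.sum_congr rfl fun j hj => by rw [if_pos (by simp at hj; omega)]

lemma main_claim (f : ℝ → ℂ) (hf : ContDiff ℝ (⊤ : ℕ∞) f) (A : (ℝ → ℂ) → (ℝ → ℂ))
    (hA : ∀ g : ℝ → ℂ, ∀ z : ℝ, A g z = f z * g z + deriv g z) (l : ℕ) :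
    A^[l] f = fun z => ((Nat.factorial (l + 1)) : ℂ) * SP (UU f z) (l + 1) (l + 1) := by
  induction l with
  | zero =>
    funext z
    have h := SP_rec (UU f z) (M := 1) (N := 1) le_rfl
    rw [Finset.sum_range_one, SP_zero] at h
    simp only [Function.iterate_zero, id]
    simp only [one_mul, mul_one, Nat.cast_one, Nat.cast_ofNat, Nat.zero_add] at h
    rw [show (Nat.factorial 1 : ℂ) = 1 by norm_num [Nat.factorial], one_mul]
    rw [h]
    simp [UU]
  | succ l ih =>
    funext z
    rw [Function.iterate_succ_apply', hA, ih]
    have hderiv := HasDerivAt.deriv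
      (((hasDerivAt_SP hf (le_refl (l + 1)) z)).const_mul ((Nat.factorial (l + 1)) : ℂ))
    rw [hderiv]
    have hrec := SP_rec (UU f z) (M := l + 1 + 1) (N := l + 1 + 1) le_rfl
    rw [Finset.sum_range_succ'] at hrec
    have hrec2 : ((l + 1 + 1 : ℕ) : ℂ) * SP (UU f z) (l + 1 + 1) (l + 1 + 1)
        = (∑ i ∈ Finset.range (l + 1),
            ((i + 2 : ℕ) : ℂ) * UU f z (i + 1) * SP (UU f z) (l + 1) (l + 1 - (i + 1)))
          + UU f z 0 * SP (UU f z) (l + 1) (l + 1) := by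
      rw [hrec]
      congr 1
      · refine Finset.sum_congr rfl fun i hi => ?_
        rw [show l + 1 + 1 - (i + 1 + 1) = l + 1 - (i + 1) from by omega,
          SP_trunc _ (by omega)]
      · rw [show l + 1 + 1 - (0 + 1) = l + 1 from by omega, SP_trunc _ (by omega)]
        norm_num
    have hU0 : UU f z 0 = f z := by simp [UU]
    have hfac : ((Nat.factorial (l + 1 + 1)) : ℂ)
        = ((l + 1 + 1 : ℕ) : ℂ) * ((Nat.factorial (l + 1)) : ℂ) := by
      rw [Nat.factorial_succ]; push_cast; ring
    rw [hU0] at hrec2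
    rw [hfac, mul_comm ((l + 1 + 1 : ℕ) : ℂ) _, mul_assoc, hrec2]
    ring

end Aux

/-- `(l+1)! · S_{l+1}(f(z), f'(z)/2!, …, f^{(l)}(z)/(l+1)!) = (A^l f)(z)`
where `(A g)(z) = f(z)·g(z) + g'(z)`. -/
theorem stmt_1 (f : ℝ → ℂ) (hf : ContDiff ℝ (⊤ : ℕ∞) f)
    (A : (ℝ → ℂ) → (ℝ → ℂ)) (hA : ∀ g : ℝ → ℂ, ∀ z : ℝ, A g z = f z * g z + deriv g z)
    (l : ℕ) (z : ℝ) :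
    (Nat.factorial (l + 1) : ℂ) *
        schurPoly (l + 1) (fun k => iteratedDeriv k.1 f z / (Nat.factorial (k.1 + 1)))
      = (A^[l] f) z := by
  rw [main_claim f hf A hA l]
  rfl
end

section
/- Let l be a natural number and let z₂ < z₁ < z₃ be real numbers. Then ∫_{z₂}^{z₁} p_l(z; z₁, z₂) · (z − z₃)^{−2l−2} dz = ( (z₁ − z₃)(z₂ − z₃) )^{−l−1}, where p_l(z; z₁, z₂) = ((2l+1)! / ((l!)² (z₁−z₂)^{2l+1})) · (z₁−z)^l (z−z₂)^l. -/
/-!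
The Möbius substitution `u = (z - z₂) / (z - z₃)`, which sends the pole `z₃` to infinity and
`z₂` to `0`, maps `(z₁ - z)^l (z - z₂)^l (z - z₃)^(-2l-2) dz` to a constant multiple of the
Beta integrand `u^l (s - u)^l du` on `[0, s]`, `s = (z₁ - z₂) / (z₁ - z₃)`. Integrating by parts
repeatedly, `∫₀ˢ u^m (s - u)^n du = m! n! / (m + n + 1)! · s^(m+n+1)`.
-/

open intervalIntegral Set Nat

theorem integral_pow_mul_sub_pow_succ (m n : ℕ) (s : ℝ) :
    ∫ u in (0 : ℝ)..s, u ^ m * (s - u) ^ (n + 1) =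
      (n + 1) / (m + 1) * ∫ u in (0 : ℝ)..s, u ^ (m + 1) * (s - u) ^ n := by
  have hm : (m : ℝ) + 1 ≠ 0 := by positivity
  have hu : ∀ x ∈ uIcc 0 s, HasDerivAt (fun x : ℝ ↦ (s - x) ^ (n + 1))
      (-((n + 1) * (s - x) ^ n)) x := fun x _ ↦ by
    simpa using ((hasDerivAt_id x).const_sub s).fun_pow (n + 1)
  have hv : ∀ x ∈ uIcc 0 s, HasDerivAt (fun x : ℝ ↦ x ^ (m + 1) / (m + 1)) (x ^ m) x :=
    fun x _ ↦ by simpa [hm] using (hasDerivAt_pow (m + 1) x).div_const ((m : ℝ) + 1)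
  have parts := integral_mul_deriv_eq_deriv_mul hu hv
    (by apply Continuous.intervalIntegrable; fun_prop)
    (by apply Continuous.intervalIntegrable; fun_prop)
  simp only [sub_self, zero_pow (succ_ne_zero _), zero_div, zero_mul, mul_zero,
    zero_sub, ← integral_neg] at parts
  calc ∫ u in (0 : ℝ)..s, u ^ m * (s - u) ^ (n + 1)
      = ∫ u in (0 : ℝ)..s, (s - u) ^ (n + 1) * u ^ m := by simp only [mul_comm]
    _ = (n + 1) / (m + 1) * ∫ u in (0 : ℝ)..s, u ^ (m + 1) * (s - u) ^ n := by
      rw [parts, ← integral_const_mul]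
      congr 1 with x
      field_simp

theorem integral_pow_mul_sub_pow (m n : ℕ) (s : ℝ) :
    ∫ u in (0 : ℝ)..s, u ^ m * (s - u) ^ n = m ! * n ! / (m + n + 1)! * s ^ (m + n + 1) := by
  induction n generalizing m with
  | zero => simp [integral_pow, factorial_succ, field]
  | succ n ih =>
    rw [integral_pow_mul_sub_pow_succ, ih, show m + 1 + n + 1 = m + (n + 1) + 1 by ring]
    push_cast [factorial_succ]
    field_simp

theorem integral_sub_pow_mul_sub_pow_div_sub_pow {a b c : ℝ} (hc : c ∉ uIcc a b) (m n : ℕ) :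
    ∫ z in a..b, (b - z) ^ m * (z - a) ^ n / (z - c) ^ (m + n + 2) =
      m ! * n ! / (m + n + 1)! * (b - a) ^ (m + n + 1) /
        ((b - c) ^ (n + 1) * (a - c) ^ (m + 1)) := by
  have hzc : ∀ z ∈ uIcc a b, z - c ≠ 0 := fun z hz ↦ sub_ne_zero.mpr (ne_of_mem_of_not_mem hz hc)
  have hac := hzc a left_mem_uIcc
  have hbc := hzc b right_mem_uIcc
  set f : ℝ → ℝ := fun z ↦ (z - a) / (z - c)
  set f' : ℝ → ℝ := fun z ↦ (a - c) / (z - c) ^ 2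
  set g : ℝ → ℝ := fun u ↦ u ^ n * ((b - a) - (b - c) * u) ^ m
  have hf : ∀ z ∈ uIcc a b, HasDerivAt f (f' z) z := fun z hz ↦ by
    refine (((hasDerivAt_id z).sub_const a).div ((hasDerivAt_id z).sub_const c)
      (hzc z hz)).congr_deriv ?_
    simp only [f', id]
    ring
  have hf' : ContinuousOn f' (uIcc a b) :=
    continuousOn_const.div (by fun_prop) fun z hz ↦ pow_ne_zero 2 (hzc z hz)
  have subst := integral_comp_mul_deriv hf hf' (by fun_prop : Continuous g)
  have hintegrand : EqOn (fun z ↦ (b - z) ^ m * (z - a) ^ n / (z - c) ^ (m + n + 2))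
      (fun z ↦ ((a - c) ^ (m + 1))⁻¹ * ((g ∘ f) z * f' z)) (uIcc a b) := fun z hz ↦ by
    have hz := hzc z hz
    have hg_f : b - a - (b - c) * ((z - a) / (z - c)) = (a - c) * (b - z) / (z - c) := by
      field_simp
      ring
    simp only [Function.comp, f, f', g]
    rw [hg_f, div_pow, div_pow, mul_pow]
    field_simp
    ring
  have hg : ∀ u, g u = (b - c) ^ m * (u ^ n * ((b - a) / (b - c) - u) ^ m) := fun u ↦ by
    simp only [g]
    rw [show b - a - (b - c) * u = (b - c) * ((b - a) / (b - c) - u) by field_simp, mul_pow]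
    ring
  rw [integral_congr hintegrand, integral_const_mul, subst]
  simp only [f, sub_self, zero_div, hg, integral_const_mul, integral_pow_mul_sub_pow,
    show n + m = m + n from add_comm n m]
  rw [div_pow]
  field_simp
  ring

/-- for `z₂ < z₁ < z₃`,
`∫_{z₂}^{z₁} p_l(z; z₁, z₂) · (z − z₃)^{−2l−2} dz = ((z₁ − z₃)(z₂ − z₃))^{−l−1}`,
where `p_l(z; z₁, z₂) = ((2l+1)!/((l!)²(z₁−z₂)^{2l+1}))·(z₁−z)^l(z−z₂)^l`. -/
theorem stmt_3 (l : ℕ) (z₁ z₂ z₃ : ℝ) (h21 : z₂ < z₁) (h13 : z₁ < z₃) :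
    ∫ z in z₂..z₁,
        ((Nat.factorial (2 * l + 1) : ℝ) /
            ((Nat.factorial l : ℝ) ^ 2 * (z₁ - z₂) ^ (2 * l + 1)))
          * ((z₁ - z) ^ l * (z - z₂) ^ l) * ((z - z₃) ^ (2 * l + 2))⁻¹
      = (((z₁ - z₃) * (z₂ - z₃)) ^ (l + 1))⁻¹ := by
  have hz₃ : z₃ ∉ uIcc z₂ z₁ := by
    rw [uIcc_of_le h21.le]
    exact fun h ↦ h13.not_ge h.2
  have h12 : z₁ - z₂ ≠ 0 := sub_ne_zero.mpr h21.ne'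
  simp_rw [mul_assoc _ (_ * _), ← div_eq_mul_inv]
  rw [integral_const_mul, show 2 * l + 2 = l + l + 2 by ring,
    integral_sub_pow_mul_sub_pow_div_sub_pow hz₃, show l + l + 1 = 2 * l + 1 by ring,
    mul_pow]
  field_simp
end

section
/- Let m ≥ 1 be an integer. Then there exists a unique sequence of real numbers (C_l)_{l≥0} such that for every integer N ≥ 1: Σ_{l=0}^{N−1} ( C_l / (l+1)! ) · C(N−1, l)² / C(N+l, N−l−1) = C(m+N−1, N), where C(a,b) denotes the binomial coefficient. Moreover, this unique sequence satisfies C_l > 0 for every l ≥ 0. -/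
open Finset

def cc (l k : ℕ) : ℕ := l.choose k * (l + k).choose k

def LL (n k : ℕ) : ℕ := ∑ l ∈ range (n+1), (2*l+1) * cc l k * (2*n+1).choose (n-l)

lemma ccast' (a b n : ℕ) (h : n = a + b) :
    ((n.choose a : ℝ)) = n.factorial / (a.factorial * b.factorial) := by
  subst h
  rw [Nat.cast_choose ℝ (Nat.le_add_right a b), Nat.add_sub_cancel_left]

lemma fact_ne (n : ℕ) : ((n.factorial : ℝ)) ≠ 0 := by
  exact_mod_cast n.factorial_ne_zero



lemma IdC_generic (e d : ℕ) :
    (e+1) * (2*(e+1+d) + 5) * cc (e+1+d+2) (e+1) + (e+1) * (2*(e+1+d)+1) * cc (e+1+d) (e+1)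
      = 2*(e+1) * (2*(e+1+d)+3) * cc (e+1+d+1) (e+1)
        + (4*(e+1)+2) * (2*(e+1+d)+3) * cc (e+1+d+1) e := by
  have key : ((e+1) * (2*(e+1+d) + 5) * cc (e+1+d+2) (e+1) : ℝ) + (e+1) * (2*(e+1+d)+1) * cc (e+1+d) (e+1)
      = 2*(e+1) * (2*(e+1+d)+3) * cc (e+1+d+1) (e+1)
        + (4*(e+1)+2) * (2*(e+1+d)+3) * cc (e+1+d+1) e := by
    unfold cc
    push_cast
    rw [ccast' (e+1) (d+2) (e+1+d+2) (by omega),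
        ccast' (e+1) (e+d+3) (e+1+d+2+(e+1)) (by omega),
        ccast' (e+1) d (e+1+d) (by omega),
        ccast' (e+1) (e+d+1) (e+1+d+(e+1)) (by omega),
        ccast' (e+1) (d+1) (e+1+d+1) (by omega),
        ccast' (e+1) (e+d+2) (e+1+d+1+(e+1)) (by omega),
        ccast' e (d+2) (e+1+d+1) (by omega),
        ccast' e (e+d+2) (e+1+d+1+e) (by omega)]
    have fP : ((e+1+d+2).factorial : ℝ) = (e+d+3)*((e+d+2)*(e+d+1).factorial) := by
      rw [show e+1+d+2 = (e+d+2)+1 by omega, Nat.factorial_succ,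
          show e+d+2 = (e+d+1)+1 by omega, Nat.factorial_succ]
      push_cast; ring
    have fR2 : ((e+1+d+2+(e+1)).factorial : ℝ) = (2*e+d+4)*((2*e+d+3)*(2*e+d+2).factorial) := by
      rw [show e+1+d+2+(e+1) = (2*e+d+3)+1 by omega, Nat.factorial_succ,
          show 2*e+d+3 = (2*e+d+2)+1 by omega, Nat.factorial_succ]
      push_cast; ring
    have fP0 : ((e+1+d).factorial : ℝ) = (e+d+1).factorial := by
      rw [show e+1+d = e+d+1 by omega]
    have fR0 : ((e+1+d+(e+1)).factorial : ℝ) = (2*e+d+2).factorial := by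
      rw [show e+1+d+(e+1) = 2*e+d+2 by omega]
    have fP1 : ((e+1+d+1).factorial : ℝ) = (e+d+2)*(e+d+1).factorial := by
      rw [show e+1+d+1 = (e+d+1)+1 by omega, Nat.factorial_succ]
      push_cast; ring
    have fR1 : ((e+1+d+1+(e+1)).factorial : ℝ) = (2*e+d+3)*(2*e+d+2).factorial := by
      rw [show e+1+d+1+(e+1) = (2*e+d+2)+1 by omega, Nat.factorial_succ]
      push_cast; ring
    have fR1' : ((e+1+d+1+e).factorial : ℝ) = (2*e+d+2).factorial := by
      rw [show e+1+d+1+e = 2*e+d+2 by omega]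
    have fe1 : ((e+1).factorial : ℝ) = (e+1)*(e).factorial := by
      rw [Nat.factorial_succ]; push_cast; ring
    have fd1 : ((d+1).factorial : ℝ) = (d+1)*(d).factorial := by
      rw [Nat.factorial_succ]; push_cast; ring
    have fd2 : ((d+2).factorial : ℝ) = (d+2)*((d+1)*(d).factorial) := by
      rw [show d+2 = (d+1)+1 by omega, Nat.factorial_succ, Nat.factorial_succ]; push_cast; ring
    have fdd : ((e+d+3).factorial : ℝ) = (e+d+3)*((e+d+2)*(e+d+1).factorial) := by
      rw [show e+d+3 = (e+d+2)+1 by omega, Nat.factorial_succ,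
          show e+d+2 = (e+d+1)+1 by omega, Nat.factorial_succ]; push_cast; ring
    have fdd2 : ((e+d+2).factorial : ℝ) = (e+d+2)*(e+d+1).factorial := by
      rw [show e+d+2 = (e+d+1)+1 by omega, Nat.factorial_succ]; push_cast; ring
    rw [fP, fR2, fP0, fR0, fP1, fR1, fR1', fe1, fd2, fd1, fdd, fdd2]
    have h1 := fact_ne e
    have h2 := fact_ne d
    have h3 := fact_ne (e+d+1)
    have h4 := fact_ne (2*e+d+2)
    field_simp
    ring
  exact_mod_cast key

lemma IdC_b1 (e : ℕ) :
    (e+1) * (2*e + 5) * cc (e+2) (e+1) + (e+1) * (2*e+1) * cc e (e+1)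
      = 2*(e+1) * (2*e+3) * cc (e+1) (e+1)
        + (4*(e+1)+2) * (2*e+3) * cc (e+1) e := by
  have hz : cc e (e+1) = 0 := by
    simp [cc, Nat.choose_eq_zero_of_lt (Nat.lt_succ_self e)]
  rw [hz]
  simp only [Nat.mul_zero, Nat.add_zero]
  have key : ((e+1) * (2*e + 5) * cc (e+2) (e+1) : ℝ)
      = 2*(e+1) * (2*e+3) * cc (e+1) (e+1) + (4*(e+1)+2) * (2*e+3) * cc (e+1) e := by
    unfold cc
    push_cast
    rw [ccast' (e+1) 1 (e+2) (by omega),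
        ccast' (e+1) (e+2) (e+2+(e+1)) (by omega),
        ccast' (e+1) 0 (e+1) (by omega),
        ccast' (e+1) (e+1) (e+1+(e+1)) (by omega),
        ccast' e 1 (e+1) (by omega),
        ccast' e (e+1) (e+1+e) (by omega)]
    have f1 : ((e+2).factorial : ℝ) = (e+2)*((e+1)*(e).factorial) := by
      rw [show e+2 = (e+1)+1 by omega, Nat.factorial_succ, Nat.factorial_succ]; push_cast; ring
    have f2 : ((e+2+(e+1)).factorial : ℝ) = (2*e+3)*((2*e+2)*(2*e+1).factorial) := by
      rw [show e+2+(e+1) = (2*e+2)+1 by omega, Nat.factorial_succ,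
          show 2*e+2 = (2*e+1)+1 by omega, Nat.factorial_succ]; push_cast; ring
    have f3 : ((e+1).factorial : ℝ) = (e+1)*(e).factorial := by
      rw [Nat.factorial_succ]; push_cast; ring
    have f4 : ((e+1+(e+1)).factorial : ℝ) = (2*e+2)*(2*e+1).factorial := by
      rw [show e+1+(e+1) = (2*e+1)+1 by omega, Nat.factorial_succ]; push_cast; ring
    have f5 : ((e+1+e).factorial : ℝ) = (2*e+1).factorial := by
      rw [show e+1+e = 2*e+1 by omega]
    rw [f2, f4, f5, f1, f3]
    have h1 := fact_ne e
    have h2 := fact_ne (2*e+1)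
    have h0 : ((Nat.factorial 0 : ℕ) : ℝ) = 1 := by norm_num [Nat.factorial]
    have h1' : ((Nat.factorial 1 : ℕ) : ℝ) = 1 := by norm_num [Nat.factorial]
    rw [h0, h1']
    field_simp
    ring
  exact_mod_cast key

lemma IdC_b2 (e : ℕ) :
    (e+2) * (2*e + 5) * cc (e+2) (e+2) + (e+2) * (2*e+1) * cc e (e+2)
      = 2*(e+2) * (2*e+3) * cc (e+1) (e+2)
        + (4*(e+2)+2) * (2*e+3) * cc (e+1) (e+1) := by
  have hz1 : cc e (e+2) = 0 := by simp [cc, Nat.choose_eq_zero_of_lt (by omega : e < e+2)]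
  have hz2 : cc (e+1) (e+2) = 0 := by simp [cc, Nat.choose_eq_zero_of_lt (by omega : e+1 < e+2)]
  rw [hz1, hz2]
  simp only [Nat.mul_zero, Nat.add_zero, Nat.zero_add]
  have key : ((e+2) * (2*e + 5) * cc (e+2) (e+2) : ℝ)
      = (4*(e+2)+2) * (2*e+3) * cc (e+1) (e+1) := by
    unfold cc
    push_cast
    rw [ccast' (e+2) 0 (e+2) (by omega),
        ccast' (e+2) (e+2) (e+2+(e+2)) (by omega),
        ccast' (e+1) 0 (e+1) (by omega),
        ccast' (e+1) (e+1) (e+1+(e+1)) (by omega)]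
    have f2 : ((e+2+(e+2)).factorial : ℝ) = (2*e+4)*((2*e+3)*(2*e+2).factorial) := by
      rw [show e+2+(e+2) = (2*e+3)+1 by omega, Nat.factorial_succ,
          show 2*e+3 = (2*e+2)+1 by omega, Nat.factorial_succ]; push_cast; ring
    have f4 : ((e+1+(e+1)).factorial : ℝ) = (2*e+2).factorial := by
      rw [show e+1+(e+1) = 2*e+2 by omega]
    have f1 : ((e+2).factorial : ℝ) = (e+2)*(e+1).factorial := by
      rw [show e+2 = (e+1)+1 by omega, Nat.factorial_succ]; push_cast; ring
    rw [f2, f4, f1]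
    have h1 := fact_ne (e+1)
    have h2 := fact_ne (2*e+2)
    have h0 : ((Nat.factorial 0 : ℕ) : ℝ) = 1 := by norm_num [Nat.factorial]
    rw [h0]
    field_simp
    ring
  exact_mod_cast key

-- k = 0 case by telescoping over ℝ
lemma star2_k0 (n : ℕ) : LL n 0 = (n+1) * (2*n+1).choose (n+1) := by
  have hcc : ∀ l, cc l 0 = 1 := by intro l; simp [cc]
  have key : ((LL n 0 : ℕ) : ℝ) = (n+1) * (2*n+1).choose (n+1) := by
    unfold LL
    push_cast
    simp only [hcc]
    have tel : ∑ l ∈ range (n+1),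
        ((fun j => if j ≤ n then ((n:ℝ)+1+j) * ((2*n+1).choose (n-j)) else 0) l
          - (fun j => if j ≤ n then ((n:ℝ)+1+j) * ((2*n+1).choose (n-j)) else 0) (l+1))
        = ((n:ℝ)+1) * ((2*n+1).choose n) := by
      rw [Finset.sum_range_sub']
      simp [Nat.lt_irrefl]
    rw [Nat.choose_symm_half]
    rw [← tel]
    apply Finset.sum_congr rfl
    intro l hl
    rw [Finset.mem_range] at hl
    have hln : l ≤ n := by omega
    by_cases h : l < n
    · have h1 : l + 1 ≤ n := by omega
      simp only [hln, h1, if_pos]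
      have hsub : (n - (l+1)) = n - l - 1 := by omega
      rw [hsub]
      have hid : ((2*n+1).choose (n-l) : ℝ) * ((n:ℝ) - l) = ((2*n+1).choose (n-l-1)) * ((n:ℝ)+2+l) := by
        have h0 := Nat.choose_succ_right_eq (2*n+1) (n-l-1)
        rw [show n-l-1+1 = n-l by omega] at h0
        rw [show 2*n+1 - (n-l-1) = n+2+l by omega] at h0
        have : (((2*n+1).choose (n-l) * (n-l) : ℕ) : ℝ) = (((2*n+1).choose (n-l-1) * (n+2+l) : ℕ) : ℝ) := by
          rw [h0]
      -- cast
        push_cast [Nat.cast_sub hln] at this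
        convert this using 2
      push_cast
      nlinarith [hid]
    · -- l = n
      have hl' : l = n := by omega
      subst hl'
      have h2 : ¬ (l + 1 ≤ l) := by omega
      simp only [le_refl, if_pos, h2, if_neg, if_false]
      rw [Nat.sub_self]
      push_cast
      ring
  exact_mod_cast key

-- IdC0 : j = 0 coefficient identity
lemma IdC0 (e : ℕ) : (e+1) * ((2*1+1) * cc 1 (e+1))
    = 2*(e+1) * ((2*0+1) * cc 0 (e+1)) + (4*e+6) * ((2*0+1) * cc 0 e) := by
  match e with
  | 0 => decide
  | (f+1) =>
    have h1 : cc 1 (f+2) = 0 := by simp [cc, Nat.choose_eq_zero_of_lt (by omega : 1 < f+2)]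
    have h2 : cc 0 (f+2) = 0 := by simp [cc, Nat.choose_eq_zero_of_lt (by omega : 0 < f+2)]
    have h3 : cc 0 (f+1) = 0 := by simp [cc, Nat.choose_eq_zero_of_lt (by omega : 0 < f+1)]
    simp [h1, h2, h3]

-- IdA-type absorption
lemma IdA (n e : ℕ) :
    (n+1) * ((n+1) * (4*(e+1)*(n.choose (e+1)) + (4*e+6)*(n.choose e)))
      = (e+1) * ((2*n+2)*(2*n+3)) * ((n+1).choose (e+1)) := by
  have h1 : n.choose (e+1) * (n+1) = (n+1).choose (e+1) * (n+1-(e+1)) :=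
    Nat.choose_mul_succ_eq n (e+1)
  have h2 : (n+1) * n.choose e = (n+1).choose (e+1) * (e+1) := Nat.add_one_mul_choose_eq n e
  by_cases he : e ≤ n
  · calc (n+1) * ((n+1) * (4*(e+1)*(n.choose (e+1)) + (4*e+6)*(n.choose e)))
        = 4*(e+1)*(n+1) * (n.choose (e+1) * (n+1)) + (4*e+6)*(n+1)*((n+1) * n.choose e) := by ring
      _ = 4*(e+1)*(n+1) * ((n+1).choose (e+1) * (n+1-(e+1))) + (4*e+6)*(n+1)*((n+1).choose (e+1) * (e+1)) := by rw [h1, h2]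
      _ = (e+1) * (n+1) * (n+1).choose (e+1) * (4*(n-e) + (4*e+6)) := by
          rw [show n+1-(e+1) = n-e by omega]; ring
      _ = (e+1) * ((2*n+2)*(2*n+3)) * ((n+1).choose (e+1)) := by
          rw [show 4*(n-e) + (4*e+6) = 4*n+6 by omega]; ring
  · have z1 : n.choose (e+1) = 0 := Nat.choose_eq_zero_of_lt (by omega)
    have z2 : n.choose e = 0 := Nat.choose_eq_zero_of_lt (by omega)
    have z3 : (n+1).choose (e+1) = 0 := Nat.choose_eq_zero_of_lt (by omega)
    simp [z1, z2, z3]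

-- IdB
lemma IdB (n : ℕ) :
    (n+1) * ((n+1) * ((n+2) * ((2*n+3).choose (n+2))))
      = (n+1) * ((2*n+2)*(2*n+3)) * ((2*n+1).choose (n+1)) := by
  have h1 : (2*n+3) * (2*n+2).choose (n+1) = (2*n+3).choose (n+2) * (n+2) := by
    have := Nat.add_one_mul_choose_eq (2*n+2) (n+1)
    simpa [Nat.succ_eq_add_one, show 2*n+2+1 = 2*n+3 by omega, show n+1+1 = n+2 by omega] using this
  have h2 : (2*n+2) * (2*n+1).choose n = (2*n+2).choose (n+1) * (n+1) := by
    have := Nat.add_one_mul_choose_eq (2*n+1) n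
    simpa [Nat.succ_eq_add_one, show 2*n+1+1 = 2*n+2 by omega] using this
  have h3 : (2*n+1).choose n = (2*n+1).choose (n+1) := (Nat.choose_symm_half n).symm
  calc (n+1) * ((n+1) * ((n+2) * ((2*n+3).choose (n+2))))
      = (n+1) * ((n+1) * ((2*n+3).choose (n+2) * (n+2))) := by ring
    _ = (n+1) * ((n+1) * ((2*n+3) * (2*n+2).choose (n+1))) := by rw [h1]
    _ = (n+1) * ((2*n+3) * ((2*n+2).choose (n+1) * (n+1))) := by ring
    _ = (n+1) * ((2*n+3) * ((2*n+2) * (2*n+1).choose n)) := by rw [h2]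
    _ = (n+1) * ((2*n+2)*(2*n+3)) * ((2*n+1).choose n) := by ring
    _ = (n+1) * ((2*n+2)*(2*n+3)) * ((2*n+1).choose (n+1)) := by rw [h3]

lemma IdD (n e : ℕ) :
    (e+1) * ((n+2) * ((2*n+3).choose (n+2)) * ((n+1).choose (e+1)))
      = 4*(e+1) * ((n+1) * ((2*n+1).choose (n+1)) * (n.choose (e+1)))
        + (4*e+6) * ((n+1) * ((2*n+1).choose (n+1)) * (n.choose e)) := by
  have hpos : 0 < (n+1) * (n+1) := by positivity
  apply Nat.eq_of_mul_eq_mul_left hpos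
  calc (n+1) * (n+1) * ((e+1) * ((n+2) * ((2*n+3).choose (n+2)) * ((n+1).choose (e+1))))
      = (e+1) * ((n+1).choose (e+1)) * ((n+1) * ((n+1) * ((n+2) * ((2*n+3).choose (n+2))))) := by ring
    _ = (e+1) * ((n+1).choose (e+1)) * ((n+1) * ((2*n+2)*(2*n+3)) * ((2*n+1).choose (n+1))) := by rw [IdB]
    _ = (n+1) * ((2*n+1).choose (n+1)) * ((e+1) * ((2*n+2)*(2*n+3)) * ((n+1).choose (e+1))) := by ring
    _ = (n+1) * ((2*n+1).choose (n+1)) * ((n+1) * ((n+1) * (4*(e+1)*(n.choose (e+1)) + (4*e+6)*(n.choose e)))) := by rw [IdA]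
    _ = (n+1) * (n+1) * (4*(e+1) * ((n+1) * ((2*n+1).choose (n+1)) * (n.choose (e+1)))
        + (4*e+6) * ((n+1) * ((2*n+1).choose (n+1)) * (n.choose e))) := by ring

lemma IdC1 (e l : ℕ) :
    (e+1) * ((2*(l+2)+1) * cc (l+2) (e+1) + (2*l+1) * cc l (e+1))
      = 2*(e+1) * ((2*(l+1)+1) * cc (l+1) (e+1)) + (4*e+6) * ((2*(l+1)+1) * cc (l+1) e) := by
  rcases Nat.lt_or_ge l (e+1) with hl | hl
  · rcases Nat.lt_or_ge l e with hl2 | hl2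
    · rcases Nat.lt_or_ge (l+1) e with hl3 | hl3
      · -- l + 2 ≤ e : everything vanishes
        have z1 : cc (l+2) (e+1) = 0 := by simp [cc, Nat.choose_eq_zero_of_lt (by omega : l+2 < e+1)]
        have z2 : cc l (e+1) = 0 := by simp [cc, Nat.choose_eq_zero_of_lt (by omega : l < e+1)]
        have z3 : cc (l+1) (e+1) = 0 := by simp [cc, Nat.choose_eq_zero_of_lt (by omega : l+1 < e+1)]
        have z4 : cc (l+1) e = 0 := by simp [cc, Nat.choose_eq_zero_of_lt (by omega : l+1 < e)]
        simp [z1, z2, z3, z4]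
      · -- e = l+1
        have he : e = l + 1 := by omega
        subst he
        have := IdC_b2 l
        calc (l+1+1) * ((2*(l+2)+1) * cc (l+2) (l+1+1) + (2*l+1) * cc l (l+1+1))
            = (l+2) * (2*l + 5) * cc (l+2) (l+2) + (l+2) * (2*l+1) * cc l (l+2) := by
              rw [show l+1+1 = l+2 by omega, show 2*(l+2)+1 = 2*l+5 by omega]; ring
          _ = 2*(l+2) * (2*l+3) * cc (l+1) (l+2) + (4*(l+2)+2) * (2*l+3) * cc (l+1) (l+1) := this
          _ = 2*(l+1+1) * ((2*(l+1)+1) * cc (l+1) (l+1+1)) + (4*(l+1)+6) * ((2*(l+1)+1) * cc (l+1) (l+1)) := by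
              rw [show l+1+1 = l+2 by omega, show 2*(l+1)+1 = 2*l+3 by omega,
                  show 4*(l+1)+6 = 4*(l+2)+2 by omega]; ring
    · -- l = e
      have he : l = e := by omega
      subst he
      have := IdC_b1 l
      calc (l+1) * ((2*(l+2)+1) * cc (l+2) (l+1) + (2*l+1) * cc l (l+1))
          = (l+1) * (2*l + 5) * cc (l+2) (l+1) + (l+1) * (2*l+1) * cc l (l+1) := by
            rw [show 2*(l+2)+1 = 2*l+5 by omega]; ring
        _ = 2*(l+1) * (2*l+3) * cc (l+1) (l+1) + (4*(l+1)+2) * (2*l+3) * cc (l+1) l := this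
        _ = 2*(l+1) * ((2*(l+1)+1) * cc (l+1) (l+1)) + (4*l+6) * ((2*(l+1)+1) * cc (l+1) l) := by
            rw [show 2*(l+1)+1 = 2*l+3 by omega, show 4*l+6 = 4*(l+1)+2 by omega]; ring
  · -- generic : l = e+1+d
    obtain ⟨d, rfl⟩ : ∃ d, l = e+1+d := ⟨l - (e+1), by omega⟩
    have := IdC_generic e d
    calc (e+1) * ((2*(e+1+d+2)+1) * cc (e+1+d+2) (e+1) + (2*(e+1+d)+1) * cc (e+1+d) (e+1))
        = (e+1) * (2*(e+1+d) + 5) * cc (e+1+d+2) (e+1) + (e+1) * (2*(e+1+d)+1) * cc (e+1+d) (e+1) := by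
          rw [show 2*(e+1+d+2)+1 = 2*(e+1+d)+5 by omega]; ring
      _ = 2*(e+1) * (2*(e+1+d)+3) * cc (e+1+d+1) (e+1) + (4*(e+1)+2) * (2*(e+1+d)+3) * cc (e+1+d+1) e := this
      _ = 2*(e+1) * ((2*(e+1+d+1)+1) * cc (e+1+d+1) (e+1)) + (4*e+6) * ((2*(e+1+d+1)+1) * cc (e+1+d+1) e) := by
          rw [show 2*(e+1+d+1)+1 = 2*(e+1+d)+3 by omega, show 4*e+6 = 4*(e+1)+2 by omega]; ring

lemma pascal2 (m d : ℕ) : (m+2).choose (d+2)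
    = m.choose (d+2) + 2 * (m.choose (d+1)) + m.choose d := by
  have a1 : (m+2).choose (d+2) = (m+1).choose (d+1) + (m+1).choose (d+2) :=
    Nat.choose_succ_succ (m+1) (d+1)
  have a2 : (m+1).choose (d+1) = m.choose d + m.choose (d+1) := Nat.choose_succ_succ m d
  have a3 : (m+1).choose (d+2) = m.choose (d+1) + m.choose (d+2) := Nat.choose_succ_succ m (d+1)
  omega

theorem star2 (n : ℕ) : ∀ k, LL n k = (n+1) * ((2*n+1).choose (n+1)) * (n.choose k) := by
  induction n with
  | zero =>
    intro k
    simp [LL, cc]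
  | succ n ih =>
    intro k
    match k with
    | 0 =>
      rw [star2_k0]
      simp
    | (e+1) =>
      -- notation
      set t : ℕ → ℕ := fun l => (2*l+1) * cc l (e+1) with ht
      have hLL : ∀ m, LL m (e+1) = ∑ l ∈ range (m+1), t l * (2*m+1).choose (m-l) := by
        intro m; rfl
      -- Step A
      have hS1defs : True := trivial
      have stepA : LL (n+1) (e+1)
          = (∑ l ∈ range (n+2), t l * (2*n+1).choose (n+1-l))
            + 2 * LL n (e+1)
            + (∑ l ∈ range n, t l * (2*n+1).choose (n-1-l)) := by
        have lhs1 : LL (n+1) (e+1) = ∑ l ∈ range (n+2), t l * (2*n+3).choose (n+1-l) := by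
          rw [hLL (n+1)]
          apply Finset.sum_congr rfl
          intro l hl
          rw [show 2*(n+1)+1 = 2*n+3 by omega]
        rw [lhs1]
        rw [Finset.sum_range_succ, Finset.sum_range_succ]
        rw [Finset.sum_range_succ (fun l => t l * (2*n+1).choose (n+1-l)), Finset.sum_range_succ (fun l => t l * (2*n+1).choose (n+1-l))]
        rw [hLL n, Finset.sum_range_succ (fun l => t l * (2*n+1).choose (n-l))]
        have e1 : n+1-n = 1 := by omega
        have e2 : n+1-(n+1) = 0 := by omega
        have e3 : n-n = 0 := by omega
        rw [e1, e2, e3]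
        have pasc : ∀ l ∈ range n, t l * (2*n+3).choose (n+1-l)
            = t l * (2*n+1).choose (n+1-l) + 2 * (t l * (2*n+1).choose (n-l)) + t l * (2*n+1).choose (n-1-l) := by
          intro l hl
          rw [Finset.mem_range] at hl
          have h1 : n+1-l = (n-1-l)+2 := by omega
          have h2 : n-l = (n-1-l)+1 := by omega
          rw [h1, h2]
          have hp : (2*n+3).choose ((n-1-l)+2)
              = (2*n+1).choose ((n-1-l)+2) + 2 * (2*n+1).choose ((n-1-l)+1) + (2*n+1).choose (n-1-l) := by
            have := pascal2 (2*n+1) (n-1-l)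
            rw [show (2*n+1)+2 = 2*n+3 by omega] at this
            exact this
          rw [hp]
          ring
        rw [Finset.sum_congr rfl pasc]
        rw [Finset.sum_add_distrib, Finset.sum_add_distrib, ← Finset.mul_sum]
        have c1 : (2*n+3).choose 1 = 2*n+3 := Nat.choose_one_right _
        have c2 : (2*n+3).choose 0 = 1 := Nat.choose_zero_right _
        have c3 : (2*n+1).choose 1 = 2*n+1 := Nat.choose_one_right _
        have c4 : (2*n+1).choose 0 = 1 := Nat.choose_zero_right _
        rw [c1, c2, c3, c4]
        ring
      -- Step B
      have stepB : (e+1) * ((∑ l ∈ range (n+2), t l * (2*n+1).choose (n+1-l))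
            + (∑ l ∈ range n, t l * (2*n+1).choose (n-1-l)))
          = 2*(e+1) * LL n (e+1) + (4*e+6) * LL n e := by
        -- rewrite S1 by peeling the first index
        have hS1 : (∑ l ∈ range (n+2), t l * (2*n+1).choose (n+1-l))
            = ∑ l ∈ range (n+1), t (l+1) * (2*n+1).choose (n-l) := by
          rw [Finset.sum_range_succ' (fun l => t l * (2*n+1).choose (n+1-l)) (n+1)]
          have ht0 : t 0 = 0 := by
            simp [ht, cc, Nat.choose_eq_zero_of_lt (by omega : 0 < e+1)]
          rw [ht0]
          simp only [Nat.zero_mul, Nat.add_zero, zero_mul, add_zero]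
          apply Finset.sum_congr rfl
          intro l hl
          rw [show n+1-(l+1) = n-l by omega]
        rw [hS1]
        -- peel l = 0 from hS1 sum
        rw [Finset.sum_range_succ' (fun l => t (l+1) * (2*n+1).choose (n-l)) n]
        -- rewrite A3 index
        have hA3 : (∑ l ∈ range n, t l * (2*n+1).choose (n-1-l))
            = ∑ l ∈ range n, t l * (2*n+1).choose (n-(l+1)) := by
          apply Finset.sum_congr rfl
          intro l hl
          rw [show n-1-l = n-(l+1) by omega]
        rw [hA3]
        -- combine into a single sum, apply per-l identities
        have hper : ∀ l ∈ range n,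
            (e+1) * (t (l+1+1) * (2*n+1).choose (n-(l+1))) + (e+1) * (t l * (2*n+1).choose (n-(l+1)))
              = (fun j => (2*(e+1) * t j + (4*e+6) * ((2*j+1) * cc j e)) * (2*n+1).choose (n-j)) (l+1) := by
          intro l hl
          have hIc := IdC1 e l
          show (e+1) * (t (l+1+1) * (2*n+1).choose (n-(l+1))) + (e+1) * (t l * (2*n+1).choose (n-(l+1)))
              = (2*(e+1) * t (l+1) + (4*e+6) * ((2*(l+1)+1) * cc (l+1) e)) * (2*n+1).choose (n-(l+1))
          calc (e+1) * (t (l+1+1) * (2*n+1).choose (n-(l+1))) + (e+1) * (t l * (2*n+1).choose (n-(l+1)))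
              = ((e+1) * ((2*(l+2)+1) * cc (l+2) (e+1) + (2*l+1) * cc l (e+1))) * (2*n+1).choose (n-(l+1)) := by
                simp only [ht]
                rw [show l+1+1 = l+2 by omega]
                ring
            _ = (2*(e+1) * ((2*(l+1)+1) * cc (l+1) (e+1)) + (4*e+6) * ((2*(l+1)+1) * cc (l+1) e)) * (2*n+1).choose (n-(l+1)) := by rw [hIc]
            _ = (2*(e+1) * t (l+1) + (4*e+6) * ((2*(l+1)+1) * cc (l+1) e)) * (2*n+1).choose (n-(l+1)) := by
                simp only [ht]
        have hbd : (e+1) * (t (0+1) * (2*n+1).choose (n-0))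
            = (fun j => (2*(e+1) * t j + (4*e+6) * ((2*j+1) * cc j e)) * (2*n+1).choose (n-j)) 0 := by
          have h0 := IdC0 e
          show (e+1) * (t (0+1) * (2*n+1).choose (n-0))
              = (2*(e+1) * t 0 + (4*e+6) * ((2*0+1) * cc 0 e)) * (2*n+1).choose (n-0)
          simp only [ht]
          calc (e+1) * ((2*1+1) * cc 1 (e+1) * (2*n+1).choose (n-0))
              = ((e+1) * ((2*1+1) * cc 1 (e+1))) * (2*n+1).choose (n-0) := by ring
            _ = (2*(e+1) * ((2*0+1) * cc 0 (e+1)) + (4*e+6) * ((2*0+1) * cc 0 e)) * (2*n+1).choose (n-0) := by rw [h0]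
        have combined : (e+1) * ((∑ l ∈ range n, t (l+1+1) * (2*n+1).choose (n-(l+1))) + t (0+1) * (2*n+1).choose (n-0)
              + ∑ l ∈ range n, t l * (2*n+1).choose (n-(l+1)))
            = ∑ l ∈ range (n+1), (2*(e+1) * t l + (4*e+6) * ((2*l+1) * cc l e)) * (2*n+1).choose (n-l) := by
          calc (e+1) * ((∑ l ∈ range n, t (l+1+1) * (2*n+1).choose (n-(l+1))) + t (0+1) * (2*n+1).choose (n-0)
              + ∑ l ∈ range n, t l * (2*n+1).choose (n-(l+1)))
              = (∑ l ∈ range n, ((e+1) * (t (l+1+1) * (2*n+1).choose (n-(l+1))) + (e+1) * (t l * (2*n+1).choose (n-(l+1)))))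
                + (e+1) * (t (0+1) * (2*n+1).choose (n-0)) := by
                rw [Finset.sum_add_distrib, ← Finset.mul_sum, ← Finset.mul_sum]
                ring
            _ = (∑ l ∈ range n, (fun j => (2*(e+1) * t j + (4*e+6) * ((2*j+1) * cc j e)) * (2*n+1).choose (n-j)) (l+1))
                + (fun j => (2*(e+1) * t j + (4*e+6) * ((2*j+1) * cc j e)) * (2*n+1).choose (n-j)) 0 := by
                rw [Finset.sum_congr rfl hper, hbd]
            _ = ∑ l ∈ range (n+1), (2*(e+1) * t l + (4*e+6) * ((2*l+1) * cc l e)) * (2*n+1).choose (n-l) :=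
                (Finset.sum_range_succ' (fun j => (2*(e+1) * t j + (4*e+6) * ((2*j+1) * cc j e)) * (2*n+1).choose (n-j)) n).symm
        rw [combined]
        -- split the sum
        have split : ∑ l ∈ range (n+1), (2*(e+1) * t l + (4*e+6) * ((2*l+1) * cc l e)) * (2*n+1).choose (n-l)
            = 2*(e+1) * (∑ l ∈ range (n+1), t l * (2*n+1).choose (n-l))
              + (4*e+6) * (∑ l ∈ range (n+1), (2*l+1) * cc l e * (2*n+1).choose (n-l)) := by
          rw [Finset.mul_sum, Finset.mul_sum, ← Finset.sum_add_distrib]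
          apply Finset.sum_congr rfl
          intro l hl
          ring
        rw [split, ← hLL n]
        rfl
      -- Step C : combine
      have goal' : (e+1) * LL (n+1) (e+1) = (e+1) * ((n+2) * ((2*(n+1)+1).choose (n+1+1)) * ((n+1).choose (e+1))) := by
        rw [stepA]
        rw [show 2*(n+1)+1 = 2*n+3 by omega, show n+1+1 = n+2 by omega]
        rw [IdD n e]
        rw [← ih (e+1), ← ih e]
        rw [Nat.mul_add, Nat.mul_add]
        have expand : (e+1) * ((∑ l ∈ range (n+2), t l * (2*n+1).choose (n+1-l))
              + (∑ l ∈ range n, t l * (2*n+1).choose (n-1-l)))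
            = 2*(e+1) * LL n (e+1) + (4*e+6) * LL n e := stepB
        calc (e+1) * (∑ l ∈ range (n+2), t l * (2*n+1).choose (n+1-l))
              + (e+1) * (2 * LL n (e+1)) + (e+1) * (∑ l ∈ range n, t l * (2*n+1).choose (n-1-l))
            = (e+1) * ((∑ l ∈ range (n+2), t l * (2*n+1).choose (n+1-l))
              + (∑ l ∈ range n, t l * (2*n+1).choose (n-1-l))) + 2*(e+1) * LL n (e+1) := by ring
          _ = 2*(e+1) * LL n (e+1) + (4*e+6) * LL n e + 2*(e+1) * LL n (e+1) := by rw [expand]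
          _ = 4*(e+1) * LL n (e+1) + (4*e+6) * LL n e := by ring
      have := Nat.eq_of_mul_eq_mul_left (show 0 < e+1 by omega) goal'
      -- match the target form
      rw [this]
  -- done

-- Vandermonde in the needed form
lemma vand (m n : ℕ) : ∑ k ∈ range (n+1), m.choose (k+1) * n.choose k = (m+n).choose (n+1) := by
  rw [Nat.add_choose_eq, Finset.Nat.sum_antidiagonal_eq_sum_range_succ_mk]
  rw [Finset.sum_range_succ' (fun k => m.choose k * n.choose (n+1-k)) (n+1)]
  have hz : n.choose (n+1-0) = 0 := Nat.choose_eq_zero_of_lt (by omega)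
  rw [hz]
  simp only [Nat.mul_zero, Nat.add_zero, mul_zero, add_zero]
  apply Finset.sum_congr rfl
  intro k hk
  rw [Finset.mem_range] at hk
  rw [show n+1-(k+1) = n-k by omega, Nat.choose_symm (by omega : k ≤ n)]

-- key per-term identity (ℕ level)
lemma key_term_nat (l j : ℕ) :
    ((l+j).choose l)^2 * (2*(l+j)+1).factorial
      = (2*l+1) * ((2*(l+j)+1).choose j) * ((2*l).choose l) * ((2*l+j+1).choose j) * ((l+j).factorial)^2 := by
  have key : (((l+j).choose l : ℝ))^2 * (2*(l+j)+1).factorial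
      = (2*l+1) * ((2*(l+j)+1).choose j) * ((2*l).choose l) * ((2*l+j+1).choose j) * ((l+j).factorial)^2 := by
    rw [ccast' l j (l+j) rfl,
        ccast' j (2*l+j+1) (2*(l+j)+1) (by omega),
        ccast' l l (2*l) (by omega),
        ccast' j (2*l+1) (2*l+j+1) (by omega)]
    have f1 : ((2*(l+j)+1).factorial : ℝ) ≠ 0 := fact_ne _
    have f2 : ((2*l+j+1).factorial : ℝ) ≠ 0 := fact_ne _
    have f3 : ((2*l+1).factorial : ℝ) = (2*l+1) * (2*l).factorial := by
      rw [show 2*l+1 = (2*l)+1 by omega, Nat.factorial_succ]; push_cast; ring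
    rw [f3]
    have h1 := fact_ne l
    have h2 := fact_ne j
    have h3 := fact_ne (l+j)
    have h4 := fact_ne (2*l)
    have h5 := fact_ne (2*l+j+1)
    have h6 := fact_ne (2*(l+j)+1)
    field_simp
  exact_mod_cast key

-- the factor normalization
lemma norm_fact (n : ℕ) : ((n+1) * ((2*n+1).choose (n+1))) * (n.factorial)^2 = (2*n+1).factorial := by
  have h := Nat.choose_mul_factorial_mul_factorial (show n+1 ≤ 2*n+1 by omega)
  rw [show 2*n+1-(n+1) = n by omega] at h
  calc ((n+1) * ((2*n+1).choose (n+1))) * (n.factorial)^2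
      = (2*n+1).choose (n+1) * ((n+1) * n.factorial) * n.factorial := by ring
    _ = (2*n+1).choose (n+1) * (n+1).factorial * n.factorial := by rw [← Nat.factorial_succ]
    _ = (2*n+1).factorial := h

lemma choose_pos_real {a b : ℕ} (h : b ≤ a) : (0:ℝ) < (a.choose b : ℝ) := by
  exact_mod_cast Nat.choose_pos h

noncomputable def Cexp (m l : ℕ) : ℝ :=
  ((l+1).factorial : ℝ) * ((∑ k ∈ range (l+1), cc l k * m.choose (k+1) : ℕ) : ℝ) / (((2*l).choose l : ℕ) : ℝ)

lemma Cexp_pos (m l : ℕ) (hm : 1 ≤ m) : 0 < Cexp m l := by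
  unfold Cexp
  apply div_pos
  · apply mul_pos
    · exact_mod_cast (l+1).factorial_pos
    · have hsum : 0 < ∑ k ∈ range (l+1), cc l k * m.choose (k+1) := by
        apply Finset.sum_pos'
        · intro k hk; positivity
        · refine ⟨0, Finset.mem_range.mpr (by omega), ?_⟩
          have h0 : cc l 0 = 1 := by simp [cc]
          rw [h0, Nat.choose_one_right]
          omega
      exact_mod_cast hsum
  · exact choose_pos_real (by omega)

-- conversion of the coefficient, ℝ level, l ≤ n
lemma coeff_conv (n l : ℕ) (hl : l ≤ n) :
    ((n.choose l : ℝ))^2 / (((n+1+l).choose (n-l) : ℝ)) / (((2*l).choose l : ℕ) : ℝ)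
      = (2*l+1) * (((2*n+1).choose (n-l) : ℕ) : ℝ) * ((n.factorial : ℝ))^2 / (((2*n+1).factorial : ℝ)) := by
  obtain ⟨j, rfl⟩ : ∃ j, n = l + j := ⟨n - l, by omega⟩
  have key := key_term_nat l j
  have keyR : (((l+j).choose l : ℝ))^2 * ((2*(l+j)+1).factorial : ℝ)
      = (2*l+1) * (((2*(l+j)+1).choose j : ℕ) : ℝ) * (((2*l).choose l : ℕ) : ℝ)
        * (((2*l+j+1).choose j : ℕ) : ℝ) * (((l+j).factorial : ℝ))^2 := by
    exact_mod_cast congrArg (fun x : ℕ => (x : ℝ)) key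
  have e1 : l + j - l = j := by omega
  have e2 : l + j + 1 + l = 2*l+j+1 := by omega
  rw [e1, e2]
  have hne1 : (((2*l+j+1).choose j : ℕ) : ℝ) ≠ 0 := ne_of_gt (choose_pos_real (by omega))
  have hne2 : (((2*l).choose l : ℕ) : ℝ) ≠ 0 := ne_of_gt (choose_pos_real (by omega))
  have hne3 : (((2*(l+j)+1).factorial : ℝ)) ≠ 0 := fact_ne _
  rw [show 2*(l+j)+1 = 2*(l+j)+1 from rfl] at keyR
  field_simp
  -- goal should follow from keyR by ring manipulation
  nlinarith [keyR]

-- The expansion satisfies the equations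
lemma Cexp_satisfies (m n : ℕ) :
    ∑ l ∈ range (n+1), (Cexp m l / (((l+1).factorial : ℕ) : ℝ))
        * ((n.choose l : ℝ)^2 / (((n+1+l).choose (n-l) : ℕ) : ℝ))
      = (((m+n).choose (n+1) : ℕ) : ℝ) := by
  have step1 : ∀ l ∈ range (n+1),
      (Cexp m l / (((l+1).factorial : ℕ) : ℝ)) * ((n.choose l : ℝ)^2 / (((n+1+l).choose (n-l) : ℕ) : ℝ))
        = ((∑ k ∈ range (n+1), (2*l+1) * cc l k * (2*n+1).choose (n-l) * m.choose (k+1) : ℕ) : ℝ)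
            * (((n.factorial : ℝ))^2 / (((2*n+1).factorial : ℝ))) := by
    intro l hl
    rw [Finset.mem_range] at hl
    have hln : l ≤ n := by omega
    have hC : Cexp m l / (((l+1).factorial : ℕ) : ℝ)
        = ((∑ k ∈ range (l+1), cc l k * m.choose (k+1) : ℕ) : ℝ) / (((2*l).choose l : ℕ) : ℝ) := by
      unfold Cexp
      rw [div_div, mul_comm (((2*l).choose l : ℕ) : ℝ) (((l+1).factorial : ℝ))]
      exact mul_div_mul_left _ _ (fact_ne (l+1))
    rw [hC]
    have hext : ((∑ k ∈ range (l+1), cc l k * m.choose (k+1) : ℕ) : ℝ)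
        = ((∑ k ∈ range (n+1), cc l k * m.choose (k+1) : ℕ) : ℝ) := by
      congr 1
      apply Finset.sum_subset
      · intro x hx; rw [Finset.mem_range] at *; omega
      · intro x hx hnx
        rw [Finset.mem_range] at *
        have : l < x := by omega
        simp [cc, Nat.choose_eq_zero_of_lt this]
    rw [hext]
    have conv := coeff_conv n l hln
    calc ((∑ k ∈ range (n+1), cc l k * m.choose (k+1) : ℕ) : ℝ) / (((2*l).choose l : ℕ) : ℝ)
          * ((n.choose l : ℝ)^2 / (((n+1+l).choose (n-l) : ℕ) : ℝ))
        = ((∑ k ∈ range (n+1), cc l k * m.choose (k+1) : ℕ) : ℝ)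
          * (((n.choose l : ℝ))^2 / (((n+1+l).choose (n-l) : ℝ)) / (((2*l).choose l : ℕ) : ℝ)) := by
          ring
      _ = ((∑ k ∈ range (n+1), cc l k * m.choose (k+1) : ℕ) : ℝ)
          * ((2*l+1) * (((2*n+1).choose (n-l) : ℕ) : ℝ) * ((n.factorial : ℝ))^2 / (((2*n+1).factorial : ℝ))) := by
          rw [conv]
      _ = ((∑ k ∈ range (n+1), (2*l+1) * cc l k * (2*n+1).choose (n-l) * m.choose (k+1) : ℕ) : ℝ)
            * (((n.factorial : ℝ))^2 / (((2*n+1).factorial : ℝ))) := by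
          push_cast
          rw [Finset.sum_mul, Finset.sum_mul]
          refine Finset.sum_congr rfl fun k hk => by ring
  rw [Finset.sum_congr rfl step1]
  rw [← Finset.sum_mul]
  -- now compute the double (nat) sum
  have hnat : ∑ l ∈ range (n+1), (∑ k ∈ range (n+1), (2*l+1) * cc l k * (2*n+1).choose (n-l) * m.choose (k+1))
      = ((n+1) * ((2*n+1).choose (n+1))) * ((m+n).choose (n+1)) := by
    rw [Finset.sum_comm]
    have inner : ∀ k ∈ range (n+1),
        (∑ l ∈ range (n+1), (2*l+1) * cc l k * (2*n+1).choose (n-l) * m.choose (k+1))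
          = ((n+1) * ((2*n+1).choose (n+1))) * (m.choose (k+1) * n.choose k) := by
      intro k hk
      rw [← Finset.sum_mul]
      have : (∑ l ∈ range (n+1), (2*l+1) * cc l k * (2*n+1).choose (n-l)) = LL n k := rfl
      rw [this, star2 n k]
      ring
    rw [Finset.sum_congr rfl inner, ← Finset.mul_sum, vand]
  have cast_hnat : ((∑ l ∈ range (n+1), (∑ k ∈ range (n+1), (2*l+1) * cc l k * (2*n+1).choose (n-l) * m.choose (k+1)) : ℕ) : ℝ)
      = ((((n+1) * ((2*n+1).choose (n+1)) : ℕ) : ℝ)) * (((m+n).choose (n+1) : ℕ) : ℝ) := by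
    exact_mod_cast congrArg (fun x : ℕ => (x : ℝ)) hnat
  have hsum_cast : (∑ l ∈ range (n+1), ((∑ k ∈ range (n+1), (2*l+1) * cc l k * (2*n+1).choose (n-l) * m.choose (k+1) : ℕ) : ℝ))
      = ((∑ l ∈ range (n+1), (∑ k ∈ range (n+1), (2*l+1) * cc l k * (2*n+1).choose (n-l) * m.choose (k+1)) : ℕ) : ℝ) := by
    push_cast
    rfl
  rw [hsum_cast, cast_hnat]
  -- final normalization
  have hnorm := norm_fact n
  have hnormR : ((((n+1) * ((2*n+1).choose (n+1)) : ℕ) : ℝ)) * ((n.factorial : ℝ))^2 = ((2*n+1).factorial : ℝ) := by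
    exact_mod_cast congrArg (fun x : ℕ => (x : ℝ)) hnorm
  have hne : ((2*n+1).factorial : ℝ) ≠ 0 := fact_ne _
  have rearr : ((((n+1) * ((2*n+1).choose (n+1)) : ℕ) : ℝ)) * (((m+n).choose (n+1) : ℕ) : ℝ)
        * (((n.factorial : ℝ))^2 / (((2*n+1).factorial : ℝ)))
      = (((m+n).choose (n+1) : ℕ) : ℝ)
        * (((((n+1) * ((2*n+1).choose (n+1)) : ℕ) : ℝ)) * ((n.factorial : ℝ))^2 / (((2*n+1).factorial : ℝ))) := by
    ring
  rw [rearr, hnormR, div_self hne, mul_one]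

lemma fact_ne' (n : ℕ) : ((n.factorial : ℝ)) ≠ 0 := by
  exact_mod_cast n.factorial_ne_zero

-- bridge : the statement's equation at N = n+1 is the same as Cexp_satisfies' shape
lemma bridge (m n : ℕ) (C : ℕ → ℝ) :
    (∑ l ∈ Finset.range (n+1),
        (C l / (Nat.factorial (l + 1) : ℝ)) *
          ((((n+1) - 1).choose l : ℝ) ^ 2 / (((n+1) + l).choose ((n+1) - l - 1) : ℝ))
      = ((m + (n+1) - 1).choose (n+1) : ℝ))
    ↔ (∑ l ∈ range (n+1), (C l / (((l+1).factorial : ℕ) : ℝ))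
        * ((n.choose l : ℝ)^2 / (((n+1+l).choose (n-l) : ℕ) : ℝ))
      = (((m+n).choose (n+1) : ℕ) : ℝ)) := by
  have h1 : ∀ l, (n+1) - l - 1 = n - l := by intro l; omega
  have h2 : (n+1) - 1 = n := by omega
  have h3 : m + (n+1) - 1 = m + n := by omega
  have hL : (∑ l ∈ Finset.range (n+1),
        (C l / (Nat.factorial (l + 1) : ℝ)) *
          ((((n+1) - 1).choose l : ℝ) ^ 2 / (((n+1) + l).choose ((n+1) - l - 1) : ℝ)))
      = ∑ l ∈ range (n+1), (C l / (((l+1).factorial : ℕ) : ℝ))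
        * ((n.choose l : ℝ)^2 / (((n+1+l).choose (n-l) : ℕ) : ℝ)) := by
    apply Finset.sum_congr rfl
    intro l hl
    rw [h1 l, h2]
  have hR : ((m + (n+1) - 1).choose (n+1) : ℝ) = (((m+n).choose (n+1) : ℕ) : ℝ) := by rw [h3]
  rw [hL, hR]

-- uniqueness
lemma unique_sol (m : ℕ) (C C' : ℕ → ℝ)
    (h : ∀ N : ℕ, 1 ≤ N →
      ∑ l ∈ Finset.range N, (C l / (Nat.factorial (l + 1) : ℝ)) *
        (((N - 1).choose l : ℝ) ^ 2 / ((N + l).choose (N - l - 1) : ℝ)) = ((m + N - 1).choose N : ℝ))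
    (h' : ∀ N : ℕ, 1 ≤ N →
      ∑ l ∈ Finset.range N, (C' l / (Nat.factorial (l + 1) : ℝ)) *
        (((N - 1).choose l : ℝ) ^ 2 / ((N + l).choose (N - l - 1) : ℝ)) = ((m + N - 1).choose N : ℝ)) :
    ∀ l, C l = C' l := by
  intro l
  induction l using Nat.strong_induction_on with
  | _ l ih =>
    have e1 := h (l+1) (by omega)
    have e2 := h' (l+1) (by omega)
    rw [Finset.sum_range_succ] at e1 e2
    have hinner : ∑ x ∈ Finset.range l, (C x / (Nat.factorial (x + 1) : ℝ)) *
        ((((l+1) - 1).choose x : ℝ) ^ 2 / (((l+1) + x).choose ((l+1) - x - 1) : ℝ))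
        = ∑ x ∈ Finset.range l, (C' x / (Nat.factorial (x + 1) : ℝ)) *
        ((((l+1) - 1).choose x : ℝ) ^ 2 / (((l+1) + x).choose ((l+1) - x - 1) : ℝ)) := by
      apply Finset.sum_congr rfl
      intro x hx
      rw [Finset.mem_range] at hx
      rw [ih x hx]
    have top : (C l / (Nat.factorial (l + 1) : ℝ)) *
        ((((l+1) - 1).choose l : ℝ) ^ 2 / (((l+1) + l).choose ((l+1) - l - 1) : ℝ))
        = (C' l / (Nat.factorial (l + 1) : ℝ)) *
        ((((l+1) - 1).choose l : ℝ) ^ 2 / (((l+1) + l).choose ((l+1) - l - 1) : ℝ)) := by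
      have := e1.trans e2.symm
      rw [hinner] at this
      linarith [this]
    have hcoef : ((((l+1) - 1).choose l : ℝ) ^ 2 / (((l+1) + l).choose ((l+1) - l - 1) : ℝ)) = 1 := by
      rw [show (l+1) - 1 = l by omega, show (l+1) - l - 1 = 0 by omega]
      rw [Nat.choose_self, Nat.choose_zero_right]
      norm_num
    rw [hcoef, mul_one, mul_one] at top
    have hf : (Nat.factorial (l+1) : ℝ) ≠ 0 := fact_ne' _
    field_simp at top
    exact top

/-- for `m ≥ 1` there is a unique sequence `(C_l)` of reals with
`Σ_{l=0}^{N−1} (C_l/(l+1)!)·C(N−1,l)²/C(N+l,N−l−1) = C(m+N−1,N)` for all `N ≥ 1`,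
and this unique sequence satisfies `C_l > 0` for all `l`. -/
theorem stmt_6 (m : ℕ) (hm : 1 ≤ m) :
    (∃! C : ℕ → ℝ, ∀ N : ℕ, 1 ≤ N →
        ∑ l ∈ Finset.range N,
          (C l / (Nat.factorial (l + 1) : ℝ)) *
            (((N - 1).choose l : ℝ) ^ 2 / ((N + l).choose (N - l - 1) : ℝ))
          = ((m + N - 1).choose N : ℝ)) ∧
    (∀ C : ℕ → ℝ,
      (∀ N : ℕ, 1 ≤ N →
        ∑ l ∈ Finset.range N,
          (C l / (Nat.factorial (l + 1) : ℝ)) *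
            (((N - 1).choose l : ℝ) ^ 2 / ((N + l).choose (N - l - 1) : ℝ))
          = ((m + N - 1).choose N : ℝ)) →
      ∀ l : ℕ, 0 < C l) := by
  have hsat : ∀ N : ℕ, 1 ≤ N →
      ∑ l ∈ Finset.range N, (Cexp m l / (Nat.factorial (l + 1) : ℝ)) *
        (((N - 1).choose l : ℝ) ^ 2 / ((N + l).choose (N - l - 1) : ℝ)) = ((m + N - 1).choose N : ℝ) := by
    intro N hN
    obtain ⟨n, rfl⟩ : ∃ n, N = n + 1 := ⟨N - 1, by omega⟩
    exact (bridge m n (Cexp m)).mpr (Cexp_satisfies m n)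
  constructor
  · refine ⟨Cexp m, hsat, ?_⟩
    intro C hC
    funext l
    exact unique_sol m C (Cexp m) hC hsat l
  · intro C hC l
    rw [unique_sol m C (Cexp m) hC hsat l]
    exact Cexp_pos m l hm
end

section
/- For every integer N ≥ 1: Σ_{l=0}^{N−1} C(N−1, l)² / ( C(2l, l) · C(N+l, N−l−1) ) = 1, where C(a,b) denotes the binomial coefficient. Equivalently, the sequence C_l = (l+1)!/C(2l,l) solves, for m = 1, the system Σ_{l=0}^{N−1} (C_l/(l+1)!) · C(N−1,l)²/C(N+l, N−l−1) = C(m+N−1, N) for all N ≥ 1. -/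
open Nat

lemma key (l k : ℕ) :
    (((l + (k+1)).choose l : ℝ)) ^ 2 /
        (((2 * l).choose l : ℝ) * ((2*l + k + 2).choose (k+1) : ℝ)) =
      ((l + (k+1)).choose l : ℝ) ^ 2 /
          (((2 * l).choose l : ℝ) * ((2*l + k + 1).choose (2*l) : ℝ)) -
        ((l + (k+1)).choose (l+1) : ℝ) ^ 2 /
          (((2 * (l+1)).choose (l+1) : ℝ) * ((2*l + k + 2).choose (2*(l+1)) : ℝ)) := by
  have h1 : ((l + (k+1)).choose l : ℝ) = (l + (k+1))! / (l ! * (k+1)!) := by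
    rw [Nat.cast_choose ℝ (by omega), show l + (k+1) - l = k+1 from by omega]
  have h2 : ((l + (k+1)).choose (l+1) : ℝ) = (l + (k+1))! / ((l+1)! * (k)!) := by
    rw [Nat.cast_choose ℝ (by omega), show l + (k+1) - (l+1) = k from by omega]
  have h3 : (((2*l).choose l : ℝ)) = (2*l)! / (l ! * l !) := by
    rw [Nat.cast_choose ℝ (by omega), show 2*l - l = l from by omega]
  have h4 : (((2*l + k + 2).choose (k+1) : ℝ)) = (2*l + k + 2)! / ((k+1)! * (2*l+1)!) := by
    rw [Nat.cast_choose ℝ (by omega), show 2*l + k + 2 - (k+1) = 2*l+1 from by omega]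
  have h5 : (((2*l + k + 1).choose (2*l) : ℝ)) = (2*l + k + 1)! / ((2*l)! * (k+1)!) := by
    rw [Nat.cast_choose ℝ (by omega), show 2*l + k + 1 - 2*l = k+1 from by omega]
  have h6 : (((2*(l+1)).choose (l+1) : ℝ)) = (2*l+2)! / ((l+1)! * (l+1)!) := by
    rw [Nat.cast_choose ℝ (by omega), show 2*(l+1) - (l+1) = l+1 from by omega,
      show 2*(l+1) = 2*l+2 from by omega]
  have h7 : (((2*l + k + 2).choose (2*(l+1)) : ℝ)) = (2*l + k + 2)! / ((2*l+2)! * (k)!) := by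
    rw [Nat.cast_choose ℝ (by omega), show 2*l + k + 2 - 2*(l+1) = k from by omega,
      show 2*(l+1) = 2*l+2 from by omega]
  rw [h1, h2, h3, h4, h5, h6, h7]
  have e1 : ((k+1)! : ℝ) = (k+1) * k ! := by rw [Nat.factorial_succ]; push_cast; ring
  have e2 : ((l+1)! : ℝ) = (l+1) * l ! := by rw [Nat.factorial_succ]; push_cast; ring
  have e3 : ((2*l+1)! : ℝ) = (2*l+1) * (2*l)! := by
    rw [show 2*l+1 = (2*l)+1 from rfl, Nat.factorial_succ]; push_cast; ring
  have e4 : ((2*l+2)! : ℝ) = (2*l+2) * ((2*l+1) * (2*l)!) := by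
    rw [show 2*l+2 = (2*l+1)+1 from rfl, Nat.factorial_succ, Nat.factorial_succ]
    push_cast; ring
  have e5 : ((2*l+k+2)! : ℝ) = (2*l+k+2) * (2*l+k+1)! := by
    rw [show 2*l+k+2 = (2*l+k+1)+1 from rfl, Nat.factorial_succ]; push_cast; ring
  rw [e1, e2, e3, e4, e5]
  have f1 : (l ! : ℝ) ≠ 0 := Nat.cast_ne_zero.2 (Nat.factorial_ne_zero _)
  have f2 : (k ! : ℝ) ≠ 0 := Nat.cast_ne_zero.2 (Nat.factorial_ne_zero _)
  have f3 : ((2*l)! : ℝ) ≠ 0 := Nat.cast_ne_zero.2 (Nat.factorial_ne_zero _)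
  have f4 : ((l + (k+1))! : ℝ) ≠ 0 := Nat.cast_ne_zero.2 (Nat.factorial_ne_zero _)
  have f5 : ((2*l+k+1)! : ℝ) ≠ 0 := Nat.cast_ne_zero.2 (Nat.factorial_ne_zero _)
  have g1 : ((l:ℝ)+1) ≠ 0 := by positivity
  have g2 : ((k:ℝ)+1) ≠ 0 := by positivity
  have g3 : (2*(l:ℝ)+1) ≠ 0 := by positivity
  have g4 : (2*(l:ℝ)+2) ≠ 0 := by positivity
  have g5 : (2*(l:ℝ)+(k:ℝ)+2) ≠ 0 := by positivity
  field_simp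
  ring

/-- for every `N ≥ 1`,
`Σ_{l=0}^{N−1} C(N−1,l)²/(C(2l,l)·C(N+l,N−l−1)) = 1`; equivalently, the sequence
`C_l = (l+1)!/C(2l,l)` solves the `m = 1` system
`Σ_{l=0}^{N−1} (C_l/(l+1)!)·C(N−1,l)²/C(N+l,N−l−1) = C(m+N−1,N)`. -/
theorem stmt_7 (N : ℕ) (hN : 1 ≤ N) :
    ∑ l ∈ Finset.range N,
      ((N - 1).choose l : ℝ) ^ 2 /
        (((2 * l).choose l : ℝ) * ((N + l).choose (N - l - 1) : ℝ)) = 1 := by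
  obtain ⟨n, rfl⟩ : ∃ n, N = n + 1 := ⟨N - 1, (Nat.succ_pred_eq_of_pos hN).symm⟩
  set f : ℕ → ℝ := fun l =>
    ((n.choose l : ℝ)) ^ 2 / (((2 * l).choose l : ℝ) * ((n + l).choose (2 * l) : ℝ)) with hf
  have tele : ∑ l ∈ Finset.range (n + 1), (f l - f (l + 1)) = f 0 - f (n + 1) :=
    Finset.sum_range_sub' f (n + 1)
  have hterm : ∀ l ∈ Finset.range (n + 1),
      ((n + 1 - 1).choose l : ℝ) ^ 2 /
        (((2 * l).choose l : ℝ) * ((n + 1 + l).choose (n + 1 - l - 1) : ℝ)) =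
      f l - f (l + 1) := by
    intro l hl
    rw [Finset.mem_range] at hl
    have hln : l ≤ n := by omega
    obtain ⟨k, rfl⟩ : ∃ k, n = l + k := ⟨n - l, by omega⟩
    rcases k with _ | k
    · simp [hf, Nat.choose_succ_self, Nat.choose_self,
        show l + l = 2 * l from by omega]
    · have := key l k
      rw [show l + (k + 1) + 1 - 1 = l + (k + 1) from by omega,
        show l + (k + 1) + 1 + l = 2 * l + k + 2 from by omega,
        show l + (k + 1) + 1 - l - 1 = k + 1 from by omega, this, hf]
      simp only
      rw [show l + (k + 1) + l = 2 * l + k + 1 from by omega,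
        show l + (k + 1) + (l + 1) = 2 * l + k + 2 from by omega]
  rw [Finset.sum_congr rfl hterm, tele, hf]
  simp [Nat.choose_succ_self]
end

section
/- Let m ≥ 1 be an integer and let (C_l)_{l≥0} be the unique sequence of real numbers satisfying, for every N ≥ 1, Σ_{l=0}^{N−1} (C_l/(l+1)!) · C(N−1, l)²/C(N+l, N−l−1) = C(m+N−1, N). Then for every l with 0 ≤ l ≤ 6: C_l = m^{l+1} + C(l+1, 4) · m^{l−1}/(2l−1) + C(l+1, 6) · ((5l² − 7l + 6)/(8(2l−1)(2l−3))) · m^{l−3}, where C(a,b) is the binomial coefficient and the powers m^{l−1}, m^{l−3} are integer powers of the positive real number m (the corresponding terms vanish for small l since C(l+1,4) = 0 for l < 3 and C(l+1,6) = 0 for l < 5). -/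
set_option maxHeartbeats 4000000

/-- if `(C_l)` is the (unique) real sequence solving the triangular system
`Σ_{l=0}^{N−1} (C_l/(l+1)!)·C(N−1,l)²/C(N+l,N−l−1) = C(m+N−1,N)` for all `N ≥ 1`, then
for `0 ≤ l ≤ 6`:
`C_l = m^{l+1} + C(l+1,4)·m^{l−1}/(2l−1)
      + C(l+1,6)·((5l²−7l+6)/(8(2l−1)(2l−3)))·m^{l−3}`,
the powers `m^{l−1}`, `m^{l−3}` being integer powers of the positive real `m`. -/

theorem stmt_8 (m : ℕ) (hm : 1 ≤ m) (C : ℕ → ℝ)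
    (hC : ∀ N : ℕ, 1 ≤ N →
        ∑ l ∈ Finset.range N,
          (C l / (Nat.factorial (l + 1) : ℝ)) *
            (((N - 1).choose l : ℝ) ^ 2 / ((N + l).choose (N - l - 1) : ℝ))
          = ((m + N - 1).choose N : ℝ))
    (l : ℕ) (hl : l ≤ 6) :
    C l = (m : ℝ) ^ (l + 1)
        + ((l + 1).choose 4 : ℝ) * (m : ℝ) ^ ((l : ℤ) - 1) / (2 * (l : ℝ) - 1)
        + ((l + 1).choose 6 : ℝ) *
            ((5 * (l : ℝ) ^ 2 - 7 * (l : ℝ) + 6) /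
              (8 * (2 * (l : ℝ) - 1) * (2 * (l : ℝ) - 3))) * (m : ℝ) ^ ((l : ℤ) - 3) := by
  obtain ⟨k, rfl⟩ := Nat.exists_eq_add_of_le hm
  have ch : ∀ N : ℕ, ((k+N).choose N : ℝ) * (Nat.factorial N : ℝ) = ((k+N).descFactorial N : ℝ) := by
    intro N
    exact_mod_cast by rw [Nat.descFactorial_eq_factorial_mul_choose]; push_cast; ring
  have e : ∀ N : ℕ, 1 + k + N - 1 = k + N := by omega
  have d1 : ((k+1).choose 1 : ℝ) = ((k:ℝ)+1) := by push_cast [Nat.choose_one_right]; ring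
  have d2 : ((k+2).choose 2 : ℝ) = ((k:ℝ)+1)*((k:ℝ)+2)/2 := by
    have h := ch 2; simp [Nat.descFactorial, Nat.factorial] at h; linear_combination h/2
  have d3 : ((k+3).choose 3 : ℝ) = ((k:ℝ)+1)*((k:ℝ)+2)*((k:ℝ)+3)/6 := by
    have h := ch 3; simp [Nat.descFactorial, Nat.factorial] at h; linear_combination h/6
  have d4 : ((k+4).choose 4 : ℝ) = ((k:ℝ)+1)*((k:ℝ)+2)*((k:ℝ)+3)*((k:ℝ)+4)/24 := by
    have h := ch 4; simp [Nat.descFactorial, Nat.factorial] at h; linear_combination h/24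
  have d5 : ((k+5).choose 5 : ℝ) = ((k:ℝ)+1)*((k:ℝ)+2)*((k:ℝ)+3)*((k:ℝ)+4)*((k:ℝ)+5)/120 := by
    have h := ch 5; simp [Nat.descFactorial, Nat.factorial] at h; linear_combination h/120
  have d6 : ((k+6).choose 6 : ℝ) = ((k:ℝ)+1)*((k:ℝ)+2)*((k:ℝ)+3)*((k:ℝ)+4)*((k:ℝ)+5)*((k:ℝ)+6)/720 := by
    have h := ch 6; simp [Nat.descFactorial, Nat.factorial] at h; linear_combination h/720
  have d7 : ((k+7).choose 7 : ℝ) = ((k:ℝ)+1)*((k:ℝ)+2)*((k:ℝ)+3)*((k:ℝ)+4)*((k:ℝ)+5)*((k:ℝ)+6)*((k:ℝ)+7)/5040 := by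
    have h := ch 7; simp [Nat.descFactorial, Nat.factorial] at h; linear_combination h/5040
  have h1 := hC 1 (by norm_num); rw [e 1, d1] at h1
  norm_num [Finset.sum_range_succ, Nat.choose, Nat.factorial] at h1
  have h2 := hC 2 (by norm_num); rw [e 2, d2] at h2
  norm_num [Finset.sum_range_succ, Nat.choose, Nat.factorial] at h2
  have h3 := hC 3 (by norm_num); rw [e 3, d3] at h3
  norm_num [Finset.sum_range_succ, Nat.choose, Nat.factorial] at h3
  have h4 := hC 4 (by norm_num); rw [e 4, d4] at h4
  norm_num [Finset.sum_range_succ, Nat.choose, Nat.factorial] at h4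
  have h5 := hC 5 (by norm_num); rw [e 5, d5] at h5
  norm_num [Finset.sum_range_succ, Nat.choose, Nat.factorial] at h5
  have h6 := hC 6 (by norm_num); rw [e 6, d6] at h6
  norm_num [Finset.sum_range_succ, Nat.choose, Nat.factorial] at h6
  have h7 := hC 7 (by norm_num); rw [e 7, d7] at h7
  norm_num [Finset.sum_range_succ, Nat.choose, Nat.factorial] at h7
  interval_cases l <;>
    · norm_num [Nat.choose, zpow_ofNat]
      push_cast
      linarith [h1, h2, h3, h4, h5, h6, h7]
end

section
/- Let f : ℝ → ℝ be infinitely differentiable, let k, l be natural numbers, and define G : ℝ × ℝ → ℝ by G(z₁, z₂) = ((z₁ − z₂)^{l+k}/k!) · ((2k+1)!/(k!)²) · ∫₀¹ (t(1−t))^k · f(z₂ + t(z₁ − z₂)) dt. Then for every z ∈ ℝ: (l!/(2l)!) · ( ∂_{z₁}^{l} (−∂_{z₂})^{l} G )(z, z) = f(z) if k = l, and = 0 if k ≠ l. -/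
open Finset intervalIntegral MeasureTheory Set

lemma beta_nat : ∀ (b a : ℕ), (∫ t in (0:ℝ)..1, t^a * (1-t)^b)
    = (Nat.factorial a : ℝ) * (Nat.factorial b : ℝ) / (Nat.factorial (a+b+1) : ℝ) := by
  intro b
  induction b with
  | zero =>
    intro a
    simp only [pow_zero, mul_one, integral_pow]
    rw [Nat.factorial_succ]
    push_cast
    have : ((a:ℝ)+1) ≠ 0 := by positivity
    field_simp
    simp
  | succ b ih =>
    intro a
    have key : ∀ t : ℝ, HasDerivAt (fun t : ℝ => t^(a+1) * (1-t)^(b+1))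
        ((a+1:ℝ)*t^a*(1-t)^(b+1) - (b+1:ℝ)*(t^(a+1)*(1-t)^b)) t := by
      intro t
      have h1 : HasDerivAt (fun t : ℝ => t^(a+1)) ((a+1:ℝ)*t^a) t := by
        simpa using hasDerivAt_pow (a+1) t
      have h2 : HasDerivAt (fun t : ℝ => (1-t)^(b+1)) (((b+1:ℝ))*(1-t)^b*(-1)) t := by
        have := ((hasDerivAt_id t).const_sub 1).pow (b+1)
        simpa [Pi.pow_def] using this
      have := h1.mul h2
      exact this.congr_deriv (by ring)
    have hint1 : IntervalIntegrable (fun t : ℝ => (a+1:ℝ)*t^a*(1-t)^(b+1)) volume 0 1 :=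
      (Continuous.intervalIntegrable (by continuity) _ _)
    have hint2 : IntervalIntegrable (fun t : ℝ => (b+1:ℝ)*(t^(a+1)*(1-t)^b)) volume 0 1 :=
      (Continuous.intervalIntegrable (by continuity) _ _)
    have h0 : (∫ t in (0:ℝ)..1, ((a+1:ℝ)*t^a*(1-t)^(b+1) - (b+1:ℝ)*(t^(a+1)*(1-t)^b)))
        = (1:ℝ)^(a+1) * (1-1)^(b+1) - ((0:ℝ)^(a+1) * (1-0)^(b+1)) := by
      apply intervalIntegral.integral_eq_sub_of_hasDerivAt (f := fun t : ℝ => t^(a+1) * (1-t)^(b+1))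
      · intro t _; exact key t
      · exact hint1.sub hint2
    rw [intervalIntegral.integral_sub hint1 hint2] at h0
    simp only [one_pow, sub_self, zero_pow (Nat.succ_ne_zero b), mul_zero,
      zero_pow (Nat.succ_ne_zero a), zero_mul, sub_zero, mul_one] at h0
    have e1 : (∫ t in (0:ℝ)..1, (a+1:ℝ)*t^a*(1-t)^(b+1))
        = (a+1:ℝ) * ∫ t in (0:ℝ)..1, t^a*(1-t)^(b+1) := by
      rw [← intervalIntegral.integral_const_mul]
      congr 1; funext t; ring
    have e2 : (∫ t in (0:ℝ)..1, (b+1:ℝ)*(t^(a+1)*(1-t)^b))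
        = (b+1:ℝ) * ∫ t in (0:ℝ)..1, t^(a+1)*(1-t)^b := by
      rw [← intervalIntegral.integral_const_mul]
    rw [e1, e2, ih (a+1)] at h0
    have ha : ((a:ℝ)+1) ≠ 0 := by positivity
    have heq : (∫ t in (0:ℝ)..1, t^a*(1-t)^(b+1))
        = ((b:ℝ)+1)/((a:ℝ)+1) * ((Nat.factorial (a+1) : ℝ) * (Nat.factorial b : ℝ)
            / (Nat.factorial (a+1+b+1) : ℝ)) := by
      have := sub_eq_zero.mp (by linarith [h0] : (a+1:ℝ) * (∫ t in (0:ℝ)..1, t^a*(1-t)^(b+1))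
          - ((b:ℝ)+1) * ((Nat.factorial (a+1) : ℝ) * (Nat.factorial b : ℝ)
            / (Nat.factorial (a+1+b+1) : ℝ)) = 0)
      field_simp at this ⊢
      linarith [this]
    rw [heq]
    rw [show a+1+b+1 = a+(b+1)+1 by omega, Nat.factorial_succ a, Nat.factorial_succ b]
    have hfab : (Nat.factorial (a+(b+1)+1) : ℝ) ≠ 0 := by
      exact_mod_cast Nat.factorial_ne_zero _
    push_cast
    field_simp

lemma my_iteratedDeriv_add {f g : ℝ → ℝ} {n : ℕ} (hf : ContDiff ℝ n f) (hg : ContDiff ℝ n g)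
    (x : ℝ) :
    iteratedDeriv n (fun y => f y + g y) x = iteratedDeriv n f x + iteratedDeriv n g x := by
  have := iteratedDerivWithin_add (Set.mem_univ x) uniqueDiffOn_univ
    hf.contDiffWithinAt hg.contDiffWithinAt
  simp only [iteratedDerivWithin_univ] at this
  exact this

lemma my_iteratedDeriv_cmul {f : ℝ → ℝ} {n : ℕ} (hf : ContDiff ℝ n f) (c : ℝ) (x : ℝ) :
    iteratedDeriv n (fun y => c * f y) x = c * iteratedDeriv n f x := by
  have := iteratedDerivWithin_const_mul (Set.mem_univ x) uniqueDiffOn_univ c hf.contDiffWithinAt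
  simpa [iteratedDerivWithin_univ] using this

lemma iteratedDeriv_zero_fun (n : ℕ) (x : ℝ) : iteratedDeriv n (fun _ : ℝ => (0:ℝ)) x = 0 := by
  induction n generalizing x with
  | zero => simp
  | succ n ih =>
    rw [iteratedDeriv_succ', show deriv (fun _ : ℝ => (0:ℝ)) = fun _ : ℝ => (0:ℝ) from
      funext fun y => deriv_const y 0]
    exact ih x

lemma my_iteratedDeriv_sum {ι : Type*} (s : Finset ι) (F : ι → ℝ → ℝ) {n : ℕ}
    (hF : ∀ i ∈ s, ContDiff ℝ n (F i)) (x : ℝ) :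
    iteratedDeriv n (fun y => ∑ i ∈ s, F i y) x = ∑ i ∈ s, iteratedDeriv n (F i) x := by
  classical
  induction s using Finset.induction with
  | empty =>
    simp only [Finset.sum_empty, iteratedDeriv_zero_fun]
  | insert a s hnot ih =>
    have h1 : ContDiff ℝ n (F a) := hF a (Finset.mem_insert_self a s)
    have h2 : ContDiff ℝ n (fun y => ∑ i ∈ s, F i y) :=
      ContDiff.sum fun i hi => hF i (Finset.mem_insert_of_mem hi)
    rw [show (fun y => ∑ i ∈ insert a s, F i y)
        = fun y => F a y + (fun y => ∑ i ∈ s, F i y) y from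
      funext fun y => by rw [Finset.sum_insert hnot]]
    rw [my_iteratedDeriv_add h1 h2 x, ih (fun i hi => hF i (Finset.mem_insert_of_mem hi)),
      Finset.sum_insert hnot]

lemma iteratedDeriv_pow_right (c : ℝ) (m : ℕ) : ∀ (j : ℕ) (x : ℝ),
    iteratedDeriv j (fun y => (y - c) ^ m) x = (m.descFactorial j : ℝ) * (x - c) ^ (m - j)
  | 0, x => by simp
  | j+1, x => by
    rw [iteratedDeriv_succ,
      show deriv (iteratedDeriv j (fun y => (y - c) ^ m))
        = deriv (fun y => (m.descFactorial j : ℝ) * (y - c) ^ (m - j)) from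
        congrArg _ (funext fun y => iteratedDeriv_pow_right c m j y)]
    have hd : HasDerivAt (fun y : ℝ => (m.descFactorial j : ℝ) * (y - c) ^ (m - j))
        ((m.descFactorial j : ℝ) * (((m - j : ℕ) : ℝ) * (x - c) ^ (m - j - 1) * 1)) x :=
      (((hasDerivAt_id x).sub_const c).pow _).const_mul _
    rw [hd.deriv, Nat.descFactorial_succ, show m - (j+1) = m - j - 1 from (Nat.sub_sub m j 1).symm]
    push_cast
    ring

lemma iteratedDeriv_pow_left (c : ℝ) (m : ℕ) : ∀ (j : ℕ) (x : ℝ),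
    iteratedDeriv j (fun y => (c - y) ^ m) x
      = (-1:ℝ)^j * (m.descFactorial j : ℝ) * (c - x) ^ (m - j)
  | 0, x => by simp
  | j+1, x => by
    rw [iteratedDeriv_succ,
      show deriv (iteratedDeriv j (fun y => (c - y) ^ m))
        = deriv (fun y => (-1:ℝ)^j * (m.descFactorial j : ℝ) * (c - y) ^ (m - j)) from
        congrArg _ (funext fun y => iteratedDeriv_pow_left c m j y)]
    have hd : HasDerivAt (fun y : ℝ => (-1:ℝ)^j * (m.descFactorial j : ℝ) * (c - y) ^ (m - j))
        ((-1:ℝ)^j * (m.descFactorial j : ℝ) * (((m - j : ℕ) : ℝ) * (c - x) ^ (m - j - 1) * (-1))) x :=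
      (((hasDerivAt_id x).const_sub c).pow _).const_mul _
    rw [hd.deriv, Nat.descFactorial_succ, show m - (j+1) = m - j - 1 from (Nat.sub_sub m j 1).symm]
    push_cast
    ring

lemma pascal_sum_aux (A : ℕ → ℕ → ℝ) (n : ℕ) :
    ∑ i ∈ range (n+1), (n.choose i : ℝ) * (A (i+1) (n-i) + A i (n+1-i))
      = ∑ i ∈ range (n+1+1), ((n+1).choose i : ℝ) * A i (n+1-i) := by
  rw [Finset.sum_range_succ' (fun i => ((n+1).choose i : ℝ) * A i (n+1-i)) (n+1)]
  simp only [Nat.succ_sub_succ, Nat.choose_succ_succ, Nat.choose_zero_right, Nat.cast_one,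
    Nat.cast_add, one_mul, Nat.sub_zero]
  have hsplit : ∑ i ∈ range (n+1), (n.choose i : ℝ) * (A (i+1) (n-i) + A i (n+1-i))
      = (∑ i ∈ range (n+1), (n.choose i : ℝ) * A (i+1) (n-i))
        + ∑ i ∈ range (n+1), (n.choose i : ℝ) * A i (n+1-i) := by
    rw [← Finset.sum_add_distrib]; apply Finset.sum_congr rfl; intro i _; ring
  rw [hsplit]
  have h2 : ∑ i ∈ range (n+1), (n.choose i : ℝ) * A i (n+1-i)
      = (∑ i ∈ range (n+1), (n.choose (i+1) : ℝ) * A (i+1) (n-i)) + A 0 (n+1) := by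
    rw [Finset.sum_range_succ' (fun i => (n.choose i : ℝ) * A i (n+1-i)) n]
    simp only [Nat.succ_sub_succ, Nat.choose_zero_right, Nat.cast_one, one_mul, Nat.sub_zero]
    rw [Finset.sum_range_succ (fun i => (n.choose (i+1) : ℝ) * A (i+1) (n-i)) n]
    simp [Nat.choose_succ_self]
  rw [h2]
  have h3 : ∑ x ∈ range (n+1), ((n.choose x : ℝ) + (n.choose x.succ : ℝ)) * A (x+1) (n-x)
      = ∑ x ∈ range (n+1), ((n.choose x : ℝ) * A (x+1) (n-x) + (n.choose (x+1) : ℝ) * A (x+1) (n-x)) := by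
    apply Finset.sum_congr rfl; intro i _; ring
  rw [h3, Finset.sum_add_distrib]
  ring

lemma my_leibniz (f g : ℝ → ℝ) (hf : ContDiff ℝ (⊤ : ℕ∞) f) (hg : ContDiff ℝ (⊤ : ℕ∞) g) :
    ∀ (n : ℕ) (x : ℝ), iteratedDeriv n (fun y => f y * g y) x
      = ∑ i ∈ range (n+1), (n.choose i : ℝ) * (iteratedDeriv i f x * iteratedDeriv (n-i) g x) := by
  have hdf : ∀ i : ℕ, Differentiable ℝ (iteratedDeriv i f) := fun i =>
    hf.differentiable_iteratedDeriv i (by exact_mod_cast WithTop.coe_lt_top _)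
  have hdg : ∀ i : ℕ, Differentiable ℝ (iteratedDeriv i g) := fun i =>
    hg.differentiable_iteratedDeriv i (by exact_mod_cast WithTop.coe_lt_top _)
  intro n
  induction n with
  | zero => intro x; simp
  | succ n ih =>
    intro x
    rw [iteratedDeriv_succ, show iteratedDeriv n (fun y => f y * g y)
        = fun y => ∑ i ∈ range (n+1),
          (n.choose i : ℝ) * (iteratedDeriv i f y * iteratedDeriv (n-i) g y) from funext ih]
    have hterm : ∀ i ∈ range (n+1), HasDerivAt
        (fun y => (n.choose i : ℝ) * (iteratedDeriv i f y * iteratedDeriv (n-i) g y))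
        ((n.choose i : ℝ) * (iteratedDeriv (i+1) f x * iteratedDeriv (n-i) g x
          + iteratedDeriv i f x * iteratedDeriv (n-i+1) g x)) x := by
      intro i _
      have h1 : HasDerivAt (iteratedDeriv i f) (iteratedDeriv (i+1) f x) x := by
        rw [iteratedDeriv_succ]; exact (hdf i x).hasDerivAt
      have h2 : HasDerivAt (iteratedDeriv (n-i) g) (iteratedDeriv (n-i+1) g x) x := by
        rw [iteratedDeriv_succ]; exact (hdg (n-i) x).hasDerivAt
      exact (h1.mul h2).const_mul _
    have hsum := HasDerivAt.fun_sum hterm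
    rw [hsum.deriv]
    have hfix : ∑ i ∈ range (n+1), (n.choose i : ℝ) * (iteratedDeriv (i+1) f x * iteratedDeriv (n-i) g x
          + iteratedDeriv i f x * iteratedDeriv (n-i+1) g x)
        = ∑ i ∈ range (n+1), (n.choose i : ℝ) *
            ((fun p q => iteratedDeriv p f x * iteratedDeriv q g x) (i+1) (n-i)
              + (fun p q => iteratedDeriv p f x * iteratedDeriv q g x) i (n+1-i)) := by
      apply Finset.sum_congr rfl
      intro i hi
      rw [show n+1-i = n-i+1 from (Nat.succ_sub (Nat.lt_succ_iff.mp (Finset.mem_range.mp hi)))]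
    rw [hfix, pascal_sum_aux (fun p q => iteratedDeriv p f x * iteratedDeriv q g x) n]

lemma hasDerivAt_parint (g : ℝ → ℝ) (hg : ContDiff ℝ (⊤ : ℕ∞) g)
    (w c d : ℝ → ℝ) (hw : Continuous w) (hc : Continuous c) (hd : Continuous d) (x₀ : ℝ) :
    HasDerivAt (fun x => ∫ t in (0:ℝ)..1, w t * g (c t + x * d t))
      (∫ t in (0:ℝ)..1, w t * (d t * deriv g (c t + x₀ * d t))) x₀ := by
  have hgc : Continuous g := hg.continuous
  have hgd : Differentiable ℝ g := hg.differentiable (by simp)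
  have hg' : Continuous (deriv g) := hg.continuous_deriv (by exact_mod_cast le_top)
  have hcontF : ∀ x : ℝ, Continuous (fun t => w t * g (c t + x * d t)) := fun x =>
    hw.mul (hgc.comp (hc.add (continuous_const.mul hd)))
  have hcontF' : ∀ x : ℝ, Continuous (fun t => w t * (d t * deriv g (c t + x * d t))) := fun x =>
    hw.mul (hd.mul (hg'.comp (hc.add (continuous_const.mul hd))))
  obtain ⟨C, hC⟩ : ∃ C, ∀ p ∈ (Set.Icc (x₀-1) (x₀+1) ×ˢ Set.Icc (0:ℝ) 1),
      ‖(fun p : ℝ × ℝ => w p.2 * (d p.2 * deriv g (c p.2 + p.1 * d p.2))) p‖ ≤ C := by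
    apply (isCompact_Icc.prod isCompact_Icc).exists_bound_of_continuousOn
    apply Continuous.continuousOn
    exact (hw.comp continuous_snd).mul ((hd.comp continuous_snd).mul
      (hg'.comp ((hc.comp continuous_snd).add
        (continuous_fst.mul (hd.comp continuous_snd)))))
  have key := intervalIntegral.hasDerivAt_integral_of_dominated_loc_of_deriv_le
    (μ := volume) (a := (0:ℝ)) (b := 1) (𝕜 := ℝ)
    (F := fun x t => w t * g (c t + x * d t))
    (F' := fun x t => w t * (d t * deriv g (c t + x * d t)))
    (x₀ := x₀) (bound := fun _ => C) (s := Metric.ball x₀ 1) (Metric.ball_mem_nhds x₀ one_pos)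
    (Filter.Eventually.of_forall fun x => (hcontF x).aestronglyMeasurable)
    ((hcontF x₀).intervalIntegrable _ _)
    (hcontF' x₀).aestronglyMeasurable
    ?_ intervalIntegrable_const ?_
  · exact key.2
  · apply Filter.Eventually.of_forall
    intro t ht x hx
    have hx' : x ∈ Set.Icc (x₀-1) (x₀+1) := by
      rw [Metric.mem_ball, Real.dist_eq, abs_lt] at hx
      constructor <;> linarith
    have ht' : t ∈ Set.Icc (0:ℝ) 1 := by
      rw [Set.uIoc_of_le (by norm_num : (0:ℝ) ≤ 1)] at ht
      exact ⟨ht.1.le, ht.2⟩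
    exact hC (x, t) ⟨hx', ht'⟩
  · apply Filter.Eventually.of_forall
    intro t _ x _
    have ha : HasDerivAt (fun x : ℝ => c t + x * d t) (d t) x := by
      simpa using ((hasDerivAt_id x).mul_const (d t)).const_add (c t)
    have hgg : HasDerivAt g (deriv g (c t + x * d t)) (c t + x * d t) :=
      (hgd _).hasDerivAt
    have := (hgg.comp x ha).const_mul (w t)
    simpa [mul_comm, mul_assoc, mul_left_comm] using this

noncomputable def Jf (f : ℝ → ℝ) (k i j : ℕ) (z₁ z₂ : ℝ) : ℝ :=
  ∫ t in (0:ℝ)..1, t^(k+i) * (1-t)^(k+j) * iteratedDeriv (i+j) f ((1-t)*z₂ + t*z₁)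

lemma contDiff_iteratedDeriv_of_top {f : ℝ → ℝ} (hf : ContDiff ℝ (⊤ : ℕ∞) f) (n : ℕ) :
    ContDiff ℝ (⊤ : ℕ∞) (iteratedDeriv n f) := by
  rw [iteratedDeriv_eq_iterate]
  exact hf.iterate_deriv n

lemma Jf_hasDerivAt₂ {f : ℝ → ℝ} (hf : ContDiff ℝ (⊤ : ℕ∞) f) (k i j : ℕ) (z₁ z₂ : ℝ) :
    HasDerivAt (fun y => Jf f k i j z₁ y) (Jf f k i (j+1) z₁ z₂) z₂ := by
  have h := hasDerivAt_parint (iteratedDeriv (i+j) f) (contDiff_iteratedDeriv_of_top hf _)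
    (fun t => t^(k+i) * (1-t)^(k+j)) (fun t => t*z₁) (fun t => 1-t)
    (by continuity) (by continuity) (by continuity) z₂
  have e1 : (fun x => ∫ t in (0:ℝ)..1, (t^(k+i) * (1-t)^(k+j)) * iteratedDeriv (i+j) f (t*z₁ + x * (1-t)))
      = fun y => Jf f k i j z₁ y := by
    funext x
    apply intervalIntegral.integral_congr
    intro t _
    simp only [Jf]
    rw [show t*z₁ + x*(1-t) = (1-t)*x + t*z₁ by ring]
  have e2 : (∫ t in (0:ℝ)..1, (t^(k+i) * (1-t)^(k+j)) * ((1-t) * deriv (iteratedDeriv (i+j) f) ((t*z₁) + z₂ * (1-t))))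
      = Jf f k i (j+1) z₁ z₂ := by
    apply intervalIntegral.integral_congr
    intro t _
    beta_reduce
    rw [← iteratedDeriv_succ, show i+(j+1) = (i+j)+1 by omega,
      show t*z₁ + z₂*(1-t) = (1-t)*z₂ + t*z₁ by ring]
    ring
  rw [e1] at h
  rw [← e2]
  exact h

lemma Jf_hasDerivAt₁ {f : ℝ → ℝ} (hf : ContDiff ℝ (⊤ : ℕ∞) f) (k i j : ℕ) (z₁ z₂ : ℝ) :
    HasDerivAt (fun y => Jf f k i j y z₂) (Jf f k (i+1) j z₁ z₂) z₁ := by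
  have h := hasDerivAt_parint (iteratedDeriv (i+j) f) (contDiff_iteratedDeriv_of_top hf _)
    (fun t => t^(k+i) * (1-t)^(k+j)) (fun t => (1-t)*z₂) (fun t => t)
    (by continuity) (by continuity) (by continuity) z₁
  have e1 : (fun x => ∫ t in (0:ℝ)..1, (t^(k+i) * (1-t)^(k+j)) * iteratedDeriv (i+j) f ((1-t)*z₂ + x * t))
      = fun y => Jf f k i j y z₂ := by
    funext x
    apply intervalIntegral.integral_congr
    intro t _
    simp only [Jf]
    rw [show (1-t)*z₂ + x*t = (1-t)*z₂ + t*x by ring]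
  have e2 : (∫ t in (0:ℝ)..1, (t^(k+i) * (1-t)^(k+j)) * (t * deriv (iteratedDeriv (i+j) f) ((1-t)*z₂ + z₁ * t)))
      = Jf f k (i+1) j z₁ z₂ := by
    apply intervalIntegral.integral_congr
    intro t _
    beta_reduce
    rw [← iteratedDeriv_succ, show (i+1)+j = (i+j)+1 by omega,
      show (1-t)*z₂ + z₁*t = (1-t)*z₂ + t*z₁ by ring]
    ring
  rw [e1] at h
  rw [← e2]
  exact h

lemma chain_lemma (F : ℕ → ℝ → ℝ) (h : ∀ n x, HasDerivAt (F n) (F (n+1) x) x) :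
    (∀ m, ContDiff ℝ (⊤ : ℕ∞) (F m)) ∧ ∀ n m x, iteratedDeriv n (F m) x = F (m+n) x := by
  have hderiv : ∀ m, deriv (F m) = F (m+1) := fun m => funext fun x => (h m x).deriv
  have hdiff : ∀ m, Differentiable ℝ (F m) := fun m x => (h m x).differentiableAt
  have hCD : ∀ (n : ℕ) m, ContDiff ℝ (n : ℕ∞) (F m) := by
    intro n
    induction n with
    | zero => intro m; exact contDiff_zero.2 (hdiff m).continuous
    | succ n ih =>
      intro m
      have : ((n+1 : ℕ) : WithTop ℕ∞) = (n : WithTop ℕ∞) + 1 := by push_cast; rfl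
      rw [show (((n+1 : ℕ) : ℕ∞) : WithTop ℕ∞) = (n : WithTop ℕ∞) + 1 by push_cast; rfl]
      refine contDiff_succ_iff_deriv.2 ⟨hdiff m, by simp, ?_⟩
      rw [hderiv m]
      exact_mod_cast ih (m+1)
  refine ⟨fun m => ?_, ?_⟩
  · exact contDiff_infty.2 fun n => by exact_mod_cast hCD n m
  · intro n
    induction n with
    | zero => intro m x; simp
    | succ n ih =>
      intro m x
      rw [iteratedDeriv_succ', hderiv m, ih (m+1) x, show m+1+n = m+(n+1) by omega]

lemma chain₂ {f : ℝ → ℝ} (hf : ContDiff ℝ (⊤ : ℕ∞) f) (k i j : ℕ) (z₁ : ℝ) :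
    (∀ m, ContDiff ℝ (⊤ : ℕ∞) (fun y => Jf f k i (j+m) z₁ y)) ∧
      ∀ n m x, iteratedDeriv n (fun y => Jf f k i (j+m) z₁ y) x = Jf f k i (j+(m+n)) z₁ x :=
  chain_lemma (fun n y => Jf f k i (j+n) z₁ y)
    (fun n x => by
      have := Jf_hasDerivAt₂ hf k i (j+n) z₁ x
      rwa [show j+n+1 = j+(n+1) by omega] at this)

lemma Jf_contDiff₂ {f : ℝ → ℝ} (hf : ContDiff ℝ (⊤ : ℕ∞) f) (k i j : ℕ) (z₁ : ℝ) :
    ContDiff ℝ (⊤ : ℕ∞) (fun y => Jf f k i j z₁ y) := by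
  have := (chain₂ hf k i j z₁).1 0
  simpa using this

lemma Jf_iteratedDeriv₂ {f : ℝ → ℝ} (hf : ContDiff ℝ (⊤ : ℕ∞) f) (k i j n : ℕ) (z₁ z₂ : ℝ) :
    iteratedDeriv n (fun y => Jf f k i j z₁ y) z₂ = Jf f k i (j+n) z₁ z₂ := by
  have := (chain₂ hf k i j z₁).2 n 0 z₂
  simpa using this

lemma chain₁ {f : ℝ → ℝ} (hf : ContDiff ℝ (⊤ : ℕ∞) f) (k i j : ℕ) (z₂ : ℝ) :
    (∀ m, ContDiff ℝ (⊤ : ℕ∞) (fun y => Jf f k (i+m) j y z₂)) ∧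
      ∀ n m x, iteratedDeriv n (fun y => Jf f k (i+m) j y z₂) x = Jf f k (i+(m+n)) j x z₂ :=
  chain_lemma (fun n y => Jf f k (i+n) j y z₂)
    (fun n x => by
      have := Jf_hasDerivAt₁ hf k (i+n) j x z₂
      rwa [show i+n+1 = i+(n+1) by omega] at this)

lemma Jf_contDiff₁ {f : ℝ → ℝ} (hf : ContDiff ℝ (⊤ : ℕ∞) f) (k i j : ℕ) (z₂ : ℝ) :
    ContDiff ℝ (⊤ : ℕ∞) (fun y => Jf f k i j y z₂) := by
  have := (chain₁ hf k i j z₂).1 0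
  simpa using this

lemma Jf_iteratedDeriv₁ {f : ℝ → ℝ} (hf : ContDiff ℝ (⊤ : ℕ∞) f) (k i j n : ℕ) (z₁ z₂ : ℝ) :
    iteratedDeriv n (fun y => Jf f k i j y z₂) z₁ = Jf f k (i+n) j z₁ z₂ := by
  have := (chain₁ hf k i j z₂).2 n 0 z₁
  simpa using this

lemma Jf_diag {f : ℝ → ℝ} (hf : ContDiff ℝ (⊤ : ℕ∞) f) (k i j : ℕ) (z : ℝ) :
    Jf f k i j z z = ((k+i).factorial : ℝ) * ((k+j).factorial : ℝ)
      / ((2*k+i+j+1).factorial : ℝ) * iteratedDeriv (i+j) f z := by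
  have e : Jf f k i j z z = ∫ t in (0:ℝ)..1, t^(k+i) * (1-t)^(k+j) * iteratedDeriv (i+j) f z := by
    apply intervalIntegral.integral_congr
    intro t _
    beta_reduce
    rw [show (1-t)*z + t*z = z by ring]
  rw [e, intervalIntegral.integral_mul_const, beta_nat,
    show k+i+(k+j)+1 = 2*k+i+j+1 by omega]

lemma contDiff_ofTop {f : ℝ → ℝ} (h : ContDiff ℝ (⊤ : ℕ∞) f) (n : ℕ) : ContDiff ℝ n f :=
  h.of_le (by exact_mod_cast (le_top : (n : ℕ∞) ≤ ⊤))

/-- with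
`G(z₁,z₂) = ((z₁−z₂)^{l+k}/k!)·((2k+1)!/(k!)²)·∫₀¹ (t(1−t))^k f(z₂+t(z₁−z₂)) dt`
for a smooth `f : ℝ → ℝ`, one has
`(l!/(2l)!)·(∂₁^l (−∂₂)^l G)(z,z) = f(z)` if `k = l` and `= 0` otherwise. -/
theorem stmt_9 (f : ℝ → ℝ) (hf : ContDiff ℝ (⊤ : ℕ∞) f) (k l : ℕ)
    (G : ℝ → ℝ → ℝ)
    (hG : ∀ z₁ z₂ : ℝ, G z₁ z₂ =
        ((z₁ - z₂) ^ (l + k) / (Nat.factorial k : ℝ)) *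
          ((Nat.factorial (2 * k + 1) : ℝ) / ((Nat.factorial k : ℝ) ^ 2)) *
          ∫ t in (0:ℝ)..1, (t * (1 - t)) ^ k * f (z₂ + t * (z₁ - z₂)))
    (z : ℝ) :
    ((Nat.factorial l : ℝ) / (Nat.factorial (2 * l) : ℝ)) *
        iteratedDeriv l (fun z₁ => (-1 : ℝ) ^ l * iteratedDeriv l (fun z₂ => G z₁ z₂) z) z
      = if k = l then f z else 0 := by
  classical
  have hf' : ContDiff ℝ (⊤ : ℕ∞) f := hf.of_le (by simp)
  set c₀ : ℝ := (Nat.factorial (2*k+1) : ℝ) / ((Nat.factorial k : ℝ))^3 with hc₀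
  -- Step 1 : G via Jf
  have hGJ : ∀ z₁ z₂ : ℝ, G z₁ z₂ = c₀ * ((z₁ - z₂)^(l+k) * Jf f k 0 0 z₁ z₂) := by
    intro z₁ z₂
    rw [hG z₁ z₂]
    have hJ : Jf f k 0 0 z₁ z₂ = ∫ t in (0:ℝ)..1, (t * (1 - t)) ^ k * f (z₂ + t * (z₁ - z₂)) := by
      apply intervalIntegral.integral_congr
      intro t _
      beta_reduce
      rw [show (1-t)*z₂ + t*z₁ = z₂ + t*(z₁-z₂) by ring]
      simp only [Nat.add_zero, iteratedDeriv_zero, mul_pow]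
    rw [hJ, hc₀]
    ring
  -- Step 2 : inner iterated derivative
  have hInner : ∀ z₁ : ℝ, (-1:ℝ)^l * iteratedDeriv l (fun z₂ => G z₁ z₂) z
      = ∑ b ∈ Finset.range (l+1),
          ((-1:ℝ)^l * c₀ * ((l.choose b : ℝ) * ((-1:ℝ)^b * (((l+k).descFactorial b : ℕ) : ℝ))))
            * ((z₁ - z)^(l+k-b) * Jf f k 0 (l-b) z₁ z) := by
    intro z₁
    have e1 : (fun z₂ => G z₁ z₂)
        = fun z₂ => c₀ * ((z₁ - z₂)^(l+k) * Jf f k 0 0 z₁ z₂) := funext fun z₂ => hGJ z₁ z₂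
    rw [e1, my_iteratedDeriv_cmul (f := fun z₂ => (z₁ - z₂)^(l+k) * Jf f k 0 0 z₁ z₂)
      (by exact ((contDiff_const.sub contDiff_id).pow (l+k)).mul
            (contDiff_ofTop (Jf_contDiff₂ hf' k 0 0 z₁) l)) c₀ z]
    rw [my_leibniz (fun z₂ => (z₁ - z₂)^(l+k)) (fun z₂ => Jf f k 0 0 z₁ z₂)
      ((contDiff_const.sub contDiff_id).pow (l+k)) (Jf_contDiff₂ hf' k 0 0 z₁) l z]
    rw [Finset.mul_sum, Finset.mul_sum]
    apply Finset.sum_congr rfl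
    intro b _
    rw [iteratedDeriv_pow_left z₁ (l+k) b z, Jf_iteratedDeriv₂ hf' k 0 0 (l-b) z₁ z]
    simp only [Nat.zero_add]
    ring
  -- Step 3 : outer iterated derivative
  rw [show (fun z₁ => (-1:ℝ)^l * iteratedDeriv l (fun z₂ => G z₁ z₂) z)
      = fun z₁ => ∑ b ∈ Finset.range (l+1),
          ((-1:ℝ)^l * c₀ * ((l.choose b : ℝ) * ((-1:ℝ)^b * (((l+k).descFactorial b : ℕ) : ℝ))))
            * ((z₁ - z)^(l+k-b) * Jf f k 0 (l-b) z₁ z) from funext hInner]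
  rw [my_iteratedDeriv_sum (Finset.range (l+1))
    (fun b z₁ => ((-1:ℝ)^l * c₀ * ((l.choose b : ℝ) * ((-1:ℝ)^b * (((l+k).descFactorial b : ℕ) : ℝ))))
            * ((z₁ - z)^(l+k-b) * Jf f k 0 (l-b) z₁ z))
    (fun b _ => contDiff_const.mul (((contDiff_id.sub contDiff_const).pow (l+k-b)).mul
      (contDiff_ofTop (Jf_contDiff₁ hf' k 0 (l-b) z) l))) z]
  -- Step 4 : evaluate each outer term
  have hb_eval : ∀ b : ℕ, iteratedDeriv l (fun z₁ =>
        ((-1:ℝ)^l * c₀ * ((l.choose b : ℝ) * ((-1:ℝ)^b * (((l+k).descFactorial b : ℕ) : ℝ))))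
          * ((z₁ - z)^(l+k-b) * Jf f k 0 (l-b) z₁ z)) z
      = if k ≤ b then
          ((-1:ℝ)^l * c₀ * ((l.choose b : ℝ) * ((-1:ℝ)^b * (((l+k).descFactorial b : ℕ) : ℝ))))
          * ((l.choose (l+k-b) : ℝ) * (((l+k-b).factorial : ℕ) : ℝ)
            * (((k+(l-(l+k-b))).factorial : ℝ) * ((k+(l-b)).factorial : ℝ)
                / ((2*k+(l-(l+k-b))+(l-b)+1).factorial : ℝ)
              * iteratedDeriv ((l-(l+k-b))+(l-b)) f z))
        else 0 := by
    intro b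
    rw [my_iteratedDeriv_cmul (f := fun z₁ => (z₁ - z)^(l+k-b) * Jf f k 0 (l-b) z₁ z)
      (by exact ((contDiff_id.sub contDiff_const).pow (l+k-b)).mul
            (contDiff_ofTop (Jf_contDiff₁ hf' k 0 (l-b) z) l)) _ z]
    rw [my_leibniz (fun z₁ => (z₁ - z)^(l+k-b)) (fun z₁ => Jf f k 0 (l-b) z₁ z)
      ((contDiff_id.sub contDiff_const).pow (l+k-b)) (Jf_contDiff₁ hf' k 0 (l-b) z) l z]
    by_cases hkb : k ≤ b
    · rw [if_pos hkb]
      have hmem : l+k-b ∈ Finset.range (l+1) := by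
        simp only [Finset.mem_range, Nat.lt_succ_iff]; omega
      rw [Finset.sum_eq_single_of_mem (l+k-b) hmem ?_]
      · rw [iteratedDeriv_pow_right z (l+k-b) (l+k-b) z,
          Jf_iteratedDeriv₁ hf' k 0 (l-b) (l-(l+k-b)) z z,
          Nat.sub_self, pow_zero, Nat.descFactorial_self]
        simp only [Nat.zero_add]
        rw [Jf_diag hf' k (l-(l+k-b)) (l-b) z]
        ring
      · intro a ha hne
        rcases lt_or_gt_of_ne hne with h1 | h2
        · rw [iteratedDeriv_pow_right z (l+k-b) a z, sub_self,
            zero_pow (by omega : l+k-b-a ≠ 0)]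
          ring
        · rw [iteratedDeriv_pow_right z (l+k-b) a z, Nat.descFactorial_of_lt h2]
          push_cast
          ring
    · rw [if_neg hkb]
      rw [Finset.sum_eq_zero, mul_zero]
      intro a ha
      have ha' : a ≤ l := Nat.lt_succ_iff.mp (Finset.mem_range.mp ha)
      rw [iteratedDeriv_pow_right z (l+k-b) a z, sub_self,
        zero_pow (by omega : l+k-b-a ≠ 0)]
      ring
  rw [Finset.sum_congr rfl (fun b _ => hb_eval b)]
  -- Step 5 : reindex the sum
  rw [← Finset.sum_filter, show (Finset.range (l+1)).filter (fun b => k ≤ b)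
      = Finset.Ico k (l+1) from by
    ext b; simp only [Finset.mem_filter, Finset.mem_range, Finset.mem_Ico]; omega]
  by_cases hkl : k ≤ l
  swap
  · rw [Finset.Ico_eq_empty (by omega), Finset.sum_empty, mul_zero, if_neg (by omega)]
  obtain ⟨K, hK⟩ : ∃ K, l = k + K := ⟨l - k, by omega⟩
  rw [Finset.sum_Ico_eq_sum_range, show l+1-k = K+1 by omega]
  -- Step 6 : per-term simplification
  have hterm : ∀ j ∈ Finset.range (K+1),
      ((-1:ℝ)^l * c₀ * ((l.choose (k+j) : ℝ) * ((-1:ℝ)^(k+j) * (((l+k).descFactorial (k+j) : ℕ) : ℝ))))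
          * ((l.choose (l+k-(k+j)) : ℝ) * (((l+k-(k+j)).factorial : ℕ) : ℝ)
            * (((k+(l-(l+k-(k+j)))).factorial : ℝ) * ((k+(l-(k+j))).factorial : ℝ)
                / ((2*k+(l-(l+k-(k+j)))+(l-(k+j))+1).factorial : ℝ)
              * iteratedDeriv ((l-(l+k-(k+j)))+(l-(k+j))) f z))
      = ((-1:ℝ)^l * (-1:ℝ)^k * c₀ * ((l.factorial : ℝ)^2
          / (((l:ℝ)+(k:ℝ)+1) * (K.factorial : ℝ))) * iteratedDeriv K f z)
        * ((-1:ℝ)^j * (K.choose j : ℝ)) := by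
    intro j hj
    have hjK : j ≤ K := Nat.lt_succ_iff.mp (Finset.mem_range.mp hj)
    obtain ⟨r, hr⟩ : ∃ r, K = j + r := ⟨K - j, by omega⟩
    rw [show l+k-(k+j) = k+r by omega, show l-(k+r) = j by omega,
      show l-(k+j) = r by omega, show 2*k+j+r+1 = (l+k)+1 by omega,
      Nat.factorial_succ (l+k), hr]
    -- factorial identities
    have hD : (((l+k).descFactorial (k+j) : ℕ) : ℝ)
        = ((l+k).factorial : ℝ) / ((k+r).factorial : ℝ) := by
      have h := Nat.factorial_mul_descFactorial (show k+j ≤ l+k by omega)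
      rw [show l+k-(k+j) = k+r by omega] at h
      have h' : ((k+r).factorial : ℝ) * (((l+k).descFactorial (k+j) : ℕ) : ℝ)
          = ((l+k).factorial : ℝ) := by exact_mod_cast congrArg (Nat.cast (R := ℝ)) h
      field_simp
      linarith [h']
    have hC1 : (l.choose (k+j) : ℝ)
        = (l.factorial : ℝ) / (((k+j).factorial : ℝ) * (r.factorial : ℝ)) := by
      have h := Nat.choose_mul_factorial_mul_factorial (show k+j ≤ l by omega)
      rw [show l-(k+j) = r by omega] at h
      have h' : (l.choose (k+j) : ℝ) * ((k+j).factorial : ℝ) * (r.factorial : ℝ)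
          = (l.factorial : ℝ) := by exact_mod_cast congrArg (Nat.cast (R := ℝ)) h
      field_simp
      linarith [h']
    have hC2 : (l.choose (k+r) : ℝ)
        = (l.factorial : ℝ) / (((k+r).factorial : ℝ) * (j.factorial : ℝ)) := by
      have h := Nat.choose_mul_factorial_mul_factorial (show k+r ≤ l by omega)
      rw [show l-(k+r) = j by omega] at h
      have h' : (l.choose (k+r) : ℝ) * ((k+r).factorial : ℝ) * (j.factorial : ℝ)
          = (l.factorial : ℝ) := by exact_mod_cast congrArg (Nat.cast (R := ℝ)) h
      field_simp
      linarith [h']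
    have hC3 : ((j+r).choose j : ℝ)
        = ((j+r).factorial : ℝ) / ((j.factorial : ℝ) * (r.factorial : ℝ)) := by
      have h := Nat.choose_mul_factorial_mul_factorial (show j ≤ j+r by omega)
      rw [show j+r-j = r by omega] at h
      have h' : ((j+r).choose j : ℝ) * (j.factorial : ℝ) * (r.factorial : ℝ)
          = ((j+r).factorial : ℝ) := by exact_mod_cast congrArg (Nat.cast (R := ℝ)) h
      field_simp
      linarith [h']
    rw [hD, hC1, hC2, hC3, show (-1:ℝ)^(k+j) = (-1:ℝ)^k * (-1:ℝ)^j from pow_add _ _ _]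
    have hne : ∀ m : ℕ, ((m.factorial : ℕ) : ℝ) ≠ 0 :=
      fun m => Nat.cast_ne_zero.mpr (Nat.factorial_ne_zero m)
    have hlk1 : ((l:ℝ)+(k:ℝ)+1) ≠ 0 := by positivity
    push_cast
    field_simp
  rw [Finset.sum_congr rfl hterm, ← Finset.mul_sum]
  -- Step 7 : alternating sum of binomial coefficients
  have halt : (∑ j ∈ Finset.range (K+1), (-1:ℝ)^j * (K.choose j : ℝ))
      = if K = 0 then 1 else 0 := by
    have h := Int.alternating_sum_range_choose (n := K)
    have h2 : (∑ j ∈ Finset.range (K+1), (-1:ℝ)^j * (K.choose j : ℝ))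
        = ((∑ i ∈ Finset.range (K+1), (-1:ℤ)^i * (K.choose i : ℤ) : ℤ) : ℝ) := by
      push_cast
      rfl
    rw [h2, h]
    split <;> norm_num
  rw [halt]
  rcases eq_or_ne K 0 with h0 | h0
  · rw [if_pos h0, mul_one, if_pos (by omega : k = l)]
    have hlk : l = k := by omega
    subst hlk
    rw [h0, hc₀]
    simp only [Nat.factorial_zero, Nat.cast_one, mul_one, iteratedDeriv_zero]
    rw [show 2*l+1 = (2*l)+1 from rfl, Nat.factorial_succ]
    have hne : (((2*l).factorial : ℕ) : ℝ) ≠ 0 := Nat.cast_ne_zero.mpr (Nat.factorial_ne_zero _)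
    have hne2 : ((l.factorial : ℕ) : ℝ) ≠ 0 := Nat.cast_ne_zero.mpr (Nat.factorial_ne_zero _)
    have h2 : ((l:ℝ) + (l:ℝ) + 1) ≠ 0 := by positivity
    rw [show ((-1:ℝ)^l * (-1:ℝ)^l) = 1 by rw [← mul_pow]; norm_num]
    push_cast
    field_simp
    ring
  · rw [if_neg h0, mul_zero, mul_zero, if_neg (by omega)]
end

section
/- Let τ, ζ ∈ ℂ with Im τ > 0, let m, M ≥ 1 be integers, let μ, c be integers, and let a, b be real numbers. Then Σ_{(n₁,n₂) ∈ ℤ², M ∣ (μn₁ + n₂ − c)} exp(πiτ m (n₁+a)²) · exp(2πiζ (n₁+a)) · exp(πiτ (n₂+b)²) = Σ_{r=0}^{M−1} ( Σ_{n ∈ ℤ} exp(πiτ mM² (n + (r+a)/M)²) · exp(2πi M ζ (n + (r+a)/M)) ) · ( Σ_{n' ∈ ℤ} exp(πiτ M² (n' + (c − μr + b)/M)²) ), all sums converging absolutely. -/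
open Complex Real

lemma gauss_norm_summable {τ : ℂ} (hτ : 0 < τ.im) (z α : ℂ) :
    Summable fun n : ℤ =>
      ‖Complex.exp ((π : ℂ) * I * τ * ((n : ℂ) + α) ^ 2 + 2 * π * I * z * ((n : ℂ) + α))‖ := by
  have hexp : ∀ n : ℤ,
      Complex.exp ((π : ℂ) * I * τ * ((n : ℂ) + α) ^ 2 + 2 * π * I * z * ((n : ℂ) + α))
        = Complex.exp ((π : ℂ) * I * τ * α ^ 2 + 2 * π * I * z * α) *
            jacobiTheta₂_term n (τ * α + z) τ := by
    intro n
    rw [jacobiTheta₂_term, ← Complex.exp_add]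
    exact congrArg Complex.exp (by ring)
  simp_rw [hexp, norm_mul]
  apply Summable.mul_left
  refine (summable_pow_mul_jacobiTheta₂_term_bound |(τ * α + z).im| hτ 0).of_nonneg_of_le
    (fun n => norm_nonneg _) (fun n => ?_)
  simpa only [pow_zero, one_mul] using norm_jacobiTheta₂_term_le hτ le_rfl le_rfl n

lemma gauss_summable {τ : ℂ} (hτ : 0 < τ.im) (z α : ℂ) :
    Summable fun n : ℤ =>
      Complex.exp ((π : ℂ) * I * τ * ((n : ℂ) + α) ^ 2) *
        Complex.exp (2 * (π : ℂ) * I * z * ((n : ℂ) + α)) := by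
  refine (gauss_norm_summable hτ z α).of_norm.congr fun n => ?_
  rw [Complex.exp_add]

def congEquiv (M : ℕ) (hM : 1 ≤ M) (μ c : ℤ) :
    (Fin M × (ℤ × ℤ)) ≃ {p : ℤ × ℤ // (M : ℤ) ∣ μ * p.1 + p.2 - c} where
  toFun q := ⟨(((q.1 : ℕ) : ℤ) + M * q.2.1, c - μ * ((q.1 : ℕ) : ℤ) + M * q.2.2),
    ⟨μ * q.2.1 + q.2.2, by ring⟩⟩
  invFun p :=
    (⟨(p.1.1 % (M : ℤ)).toNat, by
        have h0 : (0 : ℤ) < (M : ℤ) := by exact_mod_cast hM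
        have h1 := Int.emod_lt_of_pos p.1.1 h0
        have h2 := Int.emod_nonneg p.1.1 h0.ne'
        omega⟩,
      p.1.1 / M, (p.1.2 - c + μ * (p.1.1 % M)) / M)
  left_inv q := by
    obtain ⟨r, n, n'⟩ := q
    have hM0 : ((M : ℤ)) ≠ 0 := by
      have : (0 : ℤ) < (M : ℤ) := by exact_mod_cast hM
      exact this.ne'
    have hmod : (((r : ℕ) : ℤ) + (M : ℤ) * n) % M = ((r : ℕ) : ℤ) := by
      rw [Int.add_mul_emod_self_left]
      exact Int.emod_eq_of_lt (by positivity) (by exact_mod_cast r.2)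
    have hdiv : (((r : ℕ) : ℤ) + (M : ℤ) * n) / M = n := by
      rw [Int.add_mul_ediv_left _ _ hM0, Int.ediv_eq_zero_of_lt (by positivity)
        (by exact_mod_cast r.2), zero_add]
    refine Prod.ext (Fin.ext ?_) (Prod.ext ?_ ?_)
    · simp [hmod]
    · simpa using hdiv
    · simp only [hmod]
      have h3 : c - μ * ((r : ℕ) : ℤ) + (M : ℤ) * n' - c + μ * ((r : ℕ) : ℤ) = (M : ℤ) * n' := by
        ring
      simp only [h3, Int.mul_ediv_cancel_left _ hM0]
  right_inv p := by
    obtain ⟨⟨p1, p2⟩, hp⟩ := p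
    have hM0 : ((M : ℤ)) ≠ 0 := by
      have : (0 : ℤ) < (M : ℤ) := by exact_mod_cast hM
      exact this.ne'
    have h2 := Int.emod_nonneg p1 hM0
    have htn : (((p1 % (M : ℤ)).toNat : ℕ) : ℤ) = p1 % M := Int.toNat_of_nonneg h2
    have hd : (M : ℤ) ∣ p2 - c + μ * (p1 % M) := by
      have heq : p2 - c + μ * (p1 % M)
          = (μ * p1 + p2 - c) - (M : ℤ) * (μ * (p1 / M)) := by
        rw [Int.emod_def]; ring
      rw [heq]
      exact dvd_sub hp ⟨μ * (p1 / M), rfl⟩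
    refine Subtype.ext (Prod.ext ?_ ?_)
    · show (((p1 % (M : ℤ)).toNat : ℕ) : ℤ) + (M : ℤ) * (p1 / M) = p1
      rw [htn]
      exact Int.emod_add_mul_ediv p1 M
    · show c - μ * (((p1 % (M : ℤ)).toNat : ℕ) : ℤ)
          + (M : ℤ) * ((p2 - c + μ * (p1 % M)) / M) = p2
      rw [htn, Int.mul_ediv_cancel' hd]
      ring

noncomputable def fT (τ ζ : ℂ) (m : ℕ) (a : ℝ) (n : ℤ) : ℂ :=
  Complex.exp ((π : ℂ) * I * τ * m * ((n : ℂ) + a) ^ 2) *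
    Complex.exp (2 * (π : ℂ) * I * ζ * ((n : ℂ) + a))

noncomputable def gT (τ : ℂ) (b : ℝ) (n : ℤ) : ℂ :=
  Complex.exp ((π : ℂ) * I * τ * ((n : ℂ) + b) ^ 2)

set_option maxHeartbeats 1600000 in
/-- for `Im τ > 0`, the Gaussian sum over the congruence class
`μn₁ + n₂ ≡ c (mod M)` in `ℤ²` factorizes into a finite sum over `r = 0,…,M−1` of
products of two one-dimensional theta sums (all sums converging absolutely, which in
`ℂ` is equivalent to `Summable`):
`Σ_{M ∣ μn₁+n₂−c} e^{πiτm(n₁+a)²} e^{2πiζ(n₁+a)} e^{πiτ(n₂+b)²}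
 = Σ_{r=0}^{M−1} (Σ_n e^{πiτmM²(n+(r+a)/M)²} e^{2πiMζ(n+(r+a)/M)})
                 (Σ_{n'} e^{πiτM²(n'+(c−μr+b)/M)²})`. -/
theorem stmt_11 (τ ζ : ℂ) (hτ : 0 < τ.im) (m M : ℕ) (hm : 1 ≤ m) (hM : 1 ≤ M)
    (μ c : ℤ) (a b : ℝ) :
    Summable (fun p : {p : ℤ × ℤ // (M : ℤ) ∣ μ * p.1 + p.2 - c} =>
        Complex.exp ((π : ℂ) * I * τ * m * ((p.1.1 : ℂ) + a) ^ 2) *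
          Complex.exp (2 * (π : ℂ) * I * ζ * ((p.1.1 : ℂ) + a)) *
          Complex.exp ((π : ℂ) * I * τ * ((p.1.2 : ℂ) + b) ^ 2)) ∧
    (∀ r : ℕ, r < M →
      Summable (fun n : ℤ =>
        Complex.exp ((π : ℂ) * I * τ * m * M ^ 2 * ((n : ℂ) + ((r : ℂ) + a) / M) ^ 2) *
          Complex.exp (2 * (π : ℂ) * I * M * ζ * ((n : ℂ) + ((r : ℂ) + a) / M))) ∧
      Summable (fun n' : ℤ =>
        Complex.exp ((π : ℂ) * I * τ * M ^ 2 *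
          ((n' : ℂ) + ((c : ℂ) - μ * r + b) / M) ^ 2))) ∧
    (∑' p : {p : ℤ × ℤ // (M : ℤ) ∣ μ * p.1 + p.2 - c},
        Complex.exp ((π : ℂ) * I * τ * m * ((p.1.1 : ℂ) + a) ^ 2) *
          Complex.exp (2 * (π : ℂ) * I * ζ * ((p.1.1 : ℂ) + a)) *
          Complex.exp ((π : ℂ) * I * τ * ((p.1.2 : ℂ) + b) ^ 2))
      = ∑ r ∈ Finset.range M,
          (∑' n : ℤ,
            Complex.exp ((π : ℂ) * I * τ * m * M ^ 2 * ((n : ℂ) + ((r : ℂ) + a) / M) ^ 2) *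
              Complex.exp (2 * (π : ℂ) * I * M * ζ * ((n : ℂ) + ((r : ℂ) + a) / M))) *
          (∑' n' : ℤ,
            Complex.exp ((π : ℂ) * I * τ * M ^ 2 *
              ((n' : ℂ) + ((c : ℂ) - μ * r + b) / M) ^ 2)) := by
  have hmR : (0 : ℝ) < m := by exact_mod_cast hm
  have hMR : (0 : ℝ) < M := by exact_mod_cast hM
  have hMc : (M : ℂ) ≠ 0 := by
    simpa using (show ((M : ℝ) : ℂ) ≠ 0 by exact_mod_cast hMR.ne')
  have hMz : (M : ℤ) ≠ 0 := by exact_mod_cast hMR.ne'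
  -- summability of the two 1-dimensional families
  have hfn : Summable fun n : ℤ => ‖fT τ ζ m a n‖ := by
    have him : 0 < ((((m : ℝ) : ℂ)) * τ).im := by
      rw [Complex.im_ofReal_mul]; exact mul_pos hmR hτ
    refine (gauss_norm_summable him ζ (a : ℂ)).congr fun n => ?_
    simp only [fT]
    refine congrArg norm ?_
    rw [← Complex.exp_add]
    exact congrArg Complex.exp (by push_cast; ring)
  have hgn : Summable fun n : ℤ => ‖gT τ b n‖ := by
    refine (gauss_norm_summable hτ 0 (b : ℂ)).congr fun n => ?_
    simp only [gT]
    exact congrArg norm (congrArg Complex.exp (by ring))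
  have HS : Summable fun p : ℤ × ℤ => fT τ ζ m a p.1 * gT τ b p.2 :=
    summable_mul_of_summable_norm hfn hgn
  have P1 : Summable (fun p : {p : ℤ × ℤ // (M : ℤ) ∣ μ * p.1 + p.2 - c} =>
      fT τ ζ m a p.1.1 * gT τ b p.1.2) :=
    HS.subtype {p : ℤ × ℤ | (M : ℤ) ∣ μ * p.1 + p.2 - c}
  refine ⟨P1, fun r _ => ⟨?_, ?_⟩, ?_⟩
  · -- first theta family summable
    have him : 0 < (((((m : ℝ) * (M : ℝ) ^ 2 : ℝ)) : ℂ) * τ).im := by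
      rw [Complex.im_ofReal_mul]
      exact mul_pos (by positivity) hτ
    refine (gauss_summable him ((M : ℂ) * ζ) (((r : ℂ) + (a : ℂ)) / (M : ℂ))).congr fun n => ?_
    congr 1 <;> exact congrArg Complex.exp (by push_cast; ring)
  · -- second theta family summable
    have him : 0 < ((((((M : ℝ) ^ 2 : ℝ))) : ℂ) * τ).im := by
      rw [Complex.im_ofReal_mul]
      exact mul_pos (by positivity) hτ
    refine (gauss_summable him 0
      (((c : ℂ) - (μ : ℂ) * (r : ℂ) + (b : ℂ)) / (M : ℂ))).congr fun n => ?_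
    simp only [mul_zero, zero_mul, Complex.exp_zero, mul_one]
    exact congrArg Complex.exp (by push_cast; ring)
  · -- the main identity
    have inner1 : ∀ r : ℕ,
        (∑' n : ℤ, fT τ ζ m a ((r : ℤ) + (M : ℤ) * n))
          = ∑' n : ℤ,
              Complex.exp ((π : ℂ) * I * τ * m * M ^ 2 * ((n : ℂ) + ((r : ℂ) + a) / M) ^ 2) *
                Complex.exp (2 * (π : ℂ) * I * M * ζ * ((n : ℂ) + ((r : ℂ) + a) / M)) := by
      intro r
      refine tsum_congr fun n => ?_
      have key : ((((r : ℤ) + (M : ℤ) * n : ℤ)) : ℂ) + (a : ℂ)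
          = (M : ℂ) * ((n : ℂ) + ((r : ℂ) + (a : ℂ)) / (M : ℂ)) := by
        push_cast
        field_simp
        ring
      simp only [fT]
      rw [key]
      congr 1 <;> exact congrArg Complex.exp (by push_cast; ring)
    have inner2 : ∀ r : ℕ,
        (∑' n' : ℤ, gT τ b (c - μ * (r : ℤ) + (M : ℤ) * n'))
          = ∑' n' : ℤ,
              Complex.exp ((π : ℂ) * I * τ * M ^ 2 *
                ((n' : ℂ) + ((c : ℂ) - μ * r + b) / M) ^ 2) := by
      intro r
      refine tsum_congr fun n' => ?_
      have key : (((c - μ * (r : ℤ) + (M : ℤ) * n' : ℤ)) : ℂ) + (b : ℂ)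
          = (M : ℂ) * ((n' : ℂ) + ((c : ℂ) - (μ : ℂ) * (r : ℂ) + (b : ℂ)) / (M : ℂ)) := by
        push_cast
        field_simp
        ring
      simp only [gT]
      rw [key]
      exact congrArg Complex.exp (by push_cast; ring)
    have hFE : Summable fun q : Fin M × (ℤ × ℤ) =>
        fT τ ζ m a (((q.1 : ℕ) : ℤ) + (M : ℤ) * q.2.1) *
          gT τ b (c - μ * ((q.1 : ℕ) : ℤ) + (M : ℤ) * q.2.2) :=
      (congEquiv M hM μ c).summable_iff.mpr P1
    calc
      (∑' p : {p : ℤ × ℤ // (M : ℤ) ∣ μ * p.1 + p.2 - c},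
          Complex.exp ((π : ℂ) * I * τ * m * ((p.1.1 : ℂ) + a) ^ 2) *
            Complex.exp (2 * (π : ℂ) * I * ζ * ((p.1.1 : ℂ) + a)) *
            Complex.exp ((π : ℂ) * I * τ * ((p.1.2 : ℂ) + b) ^ 2))
          = ∑' q : Fin M × (ℤ × ℤ),
              fT τ ζ m a (((q.1 : ℕ) : ℤ) + (M : ℤ) * q.2.1) *
                gT τ b (c - μ * ((q.1 : ℕ) : ℤ) + (M : ℤ) * q.2.2) := by
        rw [← Equiv.tsum_eq (congEquiv M hM μ c)]
        exact tsum_congr fun q => rfl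
      _ = ∑ r : Fin M, ∑' p : ℤ × ℤ,
              fT τ ζ m a (((r : ℕ) : ℤ) + (M : ℤ) * p.1) *
                gT τ b (c - μ * ((r : ℕ) : ℤ) + (M : ℤ) * p.2) := by
        rw [Summable.tsum_prod hFE, tsum_fintype]
      _ = ∑ r : Fin M,
            (∑' n : ℤ, fT τ ζ m a (((r : ℕ) : ℤ) + (M : ℤ) * n)) *
              (∑' n' : ℤ, gT τ b (c - μ * ((r : ℕ) : ℤ) + (M : ℤ) * n')) := by
        refine Finset.sum_congr rfl fun r _ => ?_
        have hinj1 : Function.Injective fun n : ℤ => ((r : ℕ) : ℤ) + (M : ℤ) * n := by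
          intro x y h
          simp only at h
          exact mul_left_cancel₀ hMz (by omega)
        have hinj2 : Function.Injective fun n : ℤ =>
            c - μ * ((r : ℕ) : ℤ) + (M : ℤ) * n := by
          intro x y h
          simp only at h
          exact mul_left_cancel₀ hMz (by omega)
        exact (tsum_mul_tsum_of_summable_norm
          (hfn.comp_injective hinj1) (hgn.comp_injective hinj2)).symm
      _ = ∑ r : Fin M,
            (∑' n : ℤ,
              Complex.exp ((π : ℂ) * I * τ * m * M ^ 2 *
                ((n : ℂ) + (((r : ℕ) : ℂ) + a) / M) ^ 2) *
                Complex.exp (2 * (π : ℂ) * I * M * ζ *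
                  ((n : ℂ) + (((r : ℕ) : ℂ) + a) / M))) *
            (∑' n' : ℤ,
              Complex.exp ((π : ℂ) * I * τ * M ^ 2 *
                ((n' : ℂ) + ((c : ℂ) - μ * ((r : ℕ) : ℂ) + b) / M) ^ 2)) := by
        refine Finset.sum_congr rfl fun r _ => ?_
        rw [inner1 (r : ℕ), inner2 (r : ℕ)]
      _ = ∑ r ∈ Finset.range M,
            (∑' n : ℤ,
              Complex.exp ((π : ℂ) * I * τ * m * M ^ 2 * ((n : ℂ) + ((r : ℂ) + a) / M) ^ 2) *
                Complex.exp (2 * (π : ℂ) * I * M * ζ * ((n : ℂ) + ((r : ℂ) + a) / M))) *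
            (∑' n' : ℤ,
              Complex.exp ((π : ℂ) * I * τ * M ^ 2 *
                ((n' : ℂ) + ((c : ℂ) - μ * r + b) / M) ^ 2)) :=
        Fin.sum_univ_eq_sum_range (fun k : ℕ =>
          (∑' n : ℤ,
            Complex.exp ((π : ℂ) * I * τ * m * M ^ 2 * ((n : ℂ) + ((k : ℂ) + a) / M) ^ 2) *
              Complex.exp (2 * (π : ℂ) * I * M * ζ * ((n : ℂ) + ((k : ℂ) + a) / M))) *
          (∑' n' : ℤ,
            Complex.exp ((π : ℂ) * I * τ * M ^ 2 *
              ((n' : ℂ) + ((c : ℂ) - μ * k + b) / M) ^ 2))) M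
end
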